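/- arXiv:1510.04867 — 9 statements merged into one kernel-verified Lean document; each statement's English description precedes it below -/
import Mathlib

section
/- Every sisnis ultrafilter on ω×ω has a basis of sets from 𝔓: for every set A in a sisnis ultrafilter W there is a subset A′ ⊆ A with A′ ∈ W and A′ ∈ 𝔓. -/
open Filter Set

/-- The vertical section of `A ⊆ ω × ω` at `n`. -/
def sec (A : Set (ℕ × ℕ)) (n : ℕ) : Set ℕ := {y | (n, y) ∈ A}

/-- Membership in the forcing poset `𝔓` of subsets of `ω × ω`. -/
def memP (A : Set (ℕ × ℕ)) : Prop :=
  {n | (sec A n).Infinite}.Infinite ∧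
  (∀ n, (sec A n).Nonempty → (sec A n).Infinite) ∧
  (∀ m n, m ≠ n → Disjoint (sec A m) (sec A n)) ∧
  (∀ p ∈ A, (p : ℕ × ℕ).1 < p.2) ∧
  (∀ p ∈ A, ∀ q ∈ A, (p : ℕ × ℕ).1 ≠ (q : ℕ × ℕ).2)

/-- A (nonprincipal) selective ultrafilter on ℕ. -/
def Selective (U : Ultrafilter ℕ) : Prop :=
  (U : Filter ℕ) ≤ Filter.cofinite ∧
  ∀ f : ℕ → ℕ, ∃ A ∈ U, Set.InjOn f A ∨ ∃ c, ∀ x ∈ A, f x = c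

/-- Isomorphism of ultrafilters on ℕ via a permutation of ℕ. -/
def UIso (V V' : Ultrafilter ℕ) : Prop :=
  ∃ f : Equiv.Perm ℕ, ∀ A : Set ℕ, (f : ℕ → ℕ) ⁻¹' A ∈ V ↔ A ∈ V'

/-- A sisnis ultrafilter: a selective-indexed sum of pairwise non-isomorphic
selective ultrafilters. -/
def Sisnis (W : Ultrafilter (ℕ × ℕ)) : Prop :=
  ∃ (U : Ultrafilter ℕ) (V : ℕ → Ultrafilter ℕ),
    Selective U ∧ (∀ n, Selective (V n)) ∧
    (∀ m n, m ≠ n → ¬ UIso (V m) (V n)) ∧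
    ∀ A : Set (ℕ × ℕ), A ∈ W ↔ {n | sec A n ∈ V n} ∈ U

/-- Formal symbols `x₁, …, xₙ` (left) and `y₁, …, yₙ` (right). -/
abbrev Symb (n : ℕ) := Fin n ⊕ Fin n

def symVal {n : ℕ} (a b : Fin n → ℕ) : Symb n → ℕ
  | Sum.inl i => a i
  | Sum.inr i => b i

/-- `τ` is an `n`-type: a linear pre-order of the symbols `x₁,…,xₙ,y₁,…,yₙ` with
`y₁ < ⋯ < yₙ`, each `xᵢ` strictly preceding `yᵢ`, and distinct equivalent symbols both `x`'s. -/
structure IsNType (n : ℕ) (τ : Symb n → Symb n → Prop) : Prop where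
  refl : ∀ u, τ u u
  trans : ∀ u v w, τ u v → τ v w → τ u w
  total : ∀ u v, τ u v ∨ τ v u
  y_lt : ∀ i j : Fin n, i < j → τ (Sum.inr i) (Sum.inr j) ∧ ¬ τ (Sum.inr j) (Sum.inr i)
  x_lt_y : ∀ i : Fin n, τ (Sum.inl i) (Sum.inr i) ∧ ¬ τ (Sum.inr i) (Sum.inl i)
  equiv_xx : ∀ u v, u ≠ v → τ u v → τ v u → (∃ i, u = Sum.inl i) ∧ (∃ j, v = Sum.inl j)

/-- `T n` is the number of `n`-types. -/
noncomputable def T (n : ℕ) : ℕ := Nat.card {τ : Symb n → Symb n → Prop // IsNType n τ}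

/-- An `n`-element subset of `ω × ω` realizes the `n`-type `τ`: listing it as
`{(a₁,b₁),…,(aₙ,bₙ)}` with `b₁ < ⋯ < bₙ`, interpreting `xᵢ` as `aᵢ` and `yᵢ` as `bᵢ`
makes the order and equality relations among the symbols exactly those of `τ`. -/
def Realizes {n : ℕ} (τ : Symb n → Symb n → Prop) (s : Set (ℕ × ℕ)) : Prop :=
  ∃ a b : Fin n → ℕ, StrictMono b ∧ s = Set.range (fun i => (a i, b i)) ∧
    ∀ u v : Symb n, τ u v ↔ symVal a b u ≤ symVal a b v

/-- An ultrafilter is `(n,t)`-weakly Ramsey if for every partition (coloring) of the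
`n`-element subsets into finitely many pieces there is `H` in the ultrafilter such that
the `n`-element subsets of `H` meet at most `t` pieces. -/
def WeaklyRamsey {α : Type} (U : Ultrafilter α) (n t : ℕ) : Prop :=
  ∀ (k : ℕ) (c : Set α → Fin k), ∃ H ∈ U,
    ({i : Fin k | ∃ s : Set α, s ⊆ H ∧ s.Finite ∧ s.ncard = n ∧ c s = i}).ncard ≤ t

/-- A non-P-point in standard position: a nonprincipal ultrafilter on `ω × ω` such that
the first projection is neither finite-to-one nor constant on any set of the ultrafilter. -/
def StdNonPpoint (W : Ultrafilter (ℕ × ℕ)) : Prop :=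
  (W : Filter (ℕ × ℕ)) ≤ Filter.cofinite ∧
  ∀ A ∈ W, (¬ ∀ m : ℕ, {p : ℕ × ℕ | p ∈ A ∧ p.1 = m}.Finite) ∧
    (¬ ∃ c : ℕ, ∀ p ∈ A, (p : ℕ × ℕ).1 = c)

/-- The three-functions property: every function on `ω × ω` is, on some set of the
ultrafilter, constant, or one-to-one, or `π₁` followed by a one-to-one function. -/
def ThreeFunctions (W : Ultrafilter (ℕ × ℕ)) : Prop :=
  ∀ f : ℕ × ℕ → ℕ, ∃ A ∈ W,
    (∃ c, ∀ p ∈ A, f p = c) ∨ Set.InjOn f A ∨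
    (∃ g : ℕ → ℕ, Function.Injective g ∧ ∀ p ∈ A, f p = g (p : ℕ × ℕ).1)

/-- `π₁` is a conservative map on `W` (combinatorial formulation). -/
def ConservativePi1 (W : Ultrafilter (ℕ × ℕ)) : Prop :=
  ∀ R : ℕ → ℕ → ℕ → Prop, ∃ S : ℕ → ℕ → Prop, ∀ f : ℕ → ℕ,
    ({p : ℕ × ℕ | R p.1 p.2 (f p.1)} ∈ W ↔ {x : ℕ | S x (f x)} ∈ W.map Prod.fst)

/-- Formal symbols `x₁, x₂, …` (left) and `y₁, y₂, …` (right). -/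
abbrev OSym := ℕ ⊕ ℕ

def osymVal (a b : ℕ → ℕ) : OSym → ℕ
  | Sum.inl i => a i
  | Sum.inr i => b i

/-- `τ` is an ω-type. -/
structure IsOmegaType (τ : OSym → OSym → Prop) : Prop where
  /-- `τ` is a linear pre-order whose quotient linear order has order type ω. -/
  rank : ∃ r : OSym → ℕ, Function.Surjective r ∧ ∀ u v, τ u v ↔ r u ≤ r v
  y_lt : ∀ i j : ℕ, i < j → τ (Sum.inr i) (Sum.inr j) ∧ ¬ τ (Sum.inr j) (Sum.inr i)
  x_le_y : ∀ i : ℕ, τ (Sum.inl i) (Sum.inr i)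
  /-- no equivalence class contains both an `x` and a `y` -/
  x_not_equiv_y : ∀ i j : ℕ, ¬ (τ (Sum.inl i) (Sum.inr j) ∧ τ (Sum.inr j) (Sum.inl i))
  /-- every class of an `x` contains infinitely many `x`'s -/
  x_class_infinite : ∀ i : ℕ,
    {j : ℕ | τ (Sum.inl i) (Sum.inl j) ∧ τ (Sum.inl j) (Sum.inl i)}.Infinite
  /-- there are infinitely many equivalence classes of `x`'s -/
  x_classes_infinite : ∀ F : Finset ℕ, ∃ i : ℕ, ∀ j ∈ F,
    ¬ (τ (Sum.inl i) (Sum.inl j) ∧ τ (Sum.inl j) (Sum.inl i))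

/-- An element of `𝔓` realizes the ω-type `τ`. -/
def RealizesOmega (τ : OSym → OSym → Prop) (A : Set (ℕ × ℕ)) : Prop :=
  ∃ a b : ℕ → ℕ, StrictMono b ∧ A = Set.range (fun i => (a i, b i)) ∧
    ∀ u v : OSym, τ u v ↔ osymVal a b u ≤ osymVal a b v

/-- `𝔓_τ`: the elements of `𝔓` realizing the ω-type `τ`. -/
def Ptau (τ : OSym → OSym → Prop) : Set (Set (ℕ × ℕ)) :=
  {A | memP A ∧ RealizesOmega τ A}

open Classical in
/-- The identification of `𝒫(ω × ω)` with the product space `2^(ω×ω)`. -/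
noncomputable def chi (A : Set (ℕ × ℕ)) : (ℕ × ℕ) → Bool :=
  fun p => if p ∈ A then true else false

def vertRank : Symb 2 → ℕ
  | Sum.inl _ => 0
  | Sum.inr i => (i : ℕ) + 1

/-- The 2-type `x₁ = x₂ < y₁ < y₂` of pairs lying in one vertical column. -/
def vertType (u v : Symb 2) : Prop := vertRank u ≤ vertRank v

/-- Any member of an ultrafilter extending the cofinite filter is infinite. -/
lemma uf_infinite {V : Ultrafilter ℕ} (hle : (V : Filter ℕ) ≤ Filter.cofinite)
    {X : Set ℕ} (hX : X ∈ V) : X.Infinite := by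
  intro hfin
  have h2 : Xᶜ ∈ V := hle (by rw [Filter.mem_cofinite, compl_compl]; exact hfin)
  have h3 := Filter.inter_mem hX h2
  rw [Set.inter_compl_self] at h3
  exact Filter.empty_notMem (V : Filter ℕ) h3

/-- Selective (in fact P-point) ultrafilters admit pseudo-intersections mod finite. -/
lemma pseudo (V : Ultrafilter ℕ) (hle : (V : Filter ℕ) ≤ Filter.cofinite)
    (hsel : ∀ f : ℕ → ℕ, ∃ A ∈ V, Set.InjOn f A ∨ ∃ c, ∀ x ∈ A, f x = c)
    (X : ℕ → Set ℕ) (hX : ∀ k, X k ∈ V) :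
    ∃ E ∈ V, ∀ k, (E \ X k).Finite := by
  set X' : ℕ → Set ℕ := fun k => X k ∩ {y | k < y} with hX'def
  have hex : ∀ y : ℕ, {n | y ∉ X' n}.Nonempty := fun y => ⟨y, by simp [X']⟩
  set f : ℕ → ℕ := fun y => sInf {n | y ∉ X' n} with hfdef
  have hf1 : ∀ y, y ∉ X' (f y) := fun y => Nat.sInf_mem (hex y)
  have hf2 : ∀ y k, y ∉ X' k → f y ≤ k := fun y k h => Nat.sInf_le h
  obtain ⟨E, hEV, hE⟩ := hsel f
  rcases hE with hinj | ⟨c, hc⟩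
  · refine ⟨E, hEV, fun k => ?_⟩
    have hsub : E \ X k ⊆ E ∩ f ⁻¹' Set.Iic k := by
      rintro y ⟨hyE, hyX⟩
      exact ⟨hyE, hf2 y k fun h => hyX h.1⟩
    refine Set.Finite.subset ?_ hsub
    have him : (f '' (E ∩ f ⁻¹' Set.Iic k)).Finite := by
      refine (Set.finite_Iic k).subset ?_
      rintro _ ⟨y, ⟨_, hy⟩, rfl⟩; exact hy
    exact Set.Finite.of_finite_image him (hinj.mono Set.inter_subset_left)
  · exfalso
    have hX'c : X' c ∈ V := by
      refine Filter.inter_mem (hX c) (hle ?_)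
      rw [Filter.mem_cofinite]
      refine (Set.finite_Iic c).subset ?_
      intro y hy
      simpa [Set.mem_Iic, Nat.not_lt] using hy
    obtain ⟨y, hyE, hyX⟩ := Ultrafilter.nonempty_of_mem (Filter.inter_mem hEV hX'c)
    have := hf1 y
    rw [hc y hyE] at this
    exact this hyX

/-- A 2-coloring of ℕ such that `y` and `f y` get different colors whenever `f y < y`. -/
def col (f : ℕ → ℕ) : ℕ → Bool
  | y => if h : f y < y then !(col f (f y)) else false
termination_by y => y
decreasing_by exact h

lemma col_spec (f : ℕ → ℕ) (y : ℕ) (h : f y < y) : col f y = !(col f (f y)) := by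
  rw [col]; simp [h]

/-- Every sisnis ultrafilter on ω×ω has a basis of sets from 𝔓. -/
theorem stmt0 (W : Ultrafilter (ℕ × ℕ)) (hW : Sisnis W) :
    ∀ A ∈ W, ∃ A' : Set (ℕ × ℕ), A' ⊆ A ∧ A' ∈ W ∧ memP A' := by
  classical
  obtain ⟨U, Vf, hUsel, hVsel, hniso, hsum⟩ := hW
  intro A hA
  have hUle := hUsel.1
  have hVle : ∀ n, (Vf n : Filter ℕ) ≤ Filter.cofinite := fun n => (hVsel n).1
  set B : Set ℕ := {n | sec A n ∈ Vf n} with hBdef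
  have hBU : B ∈ U := (hsum A).1 hA
  -- separating sets for the pairwise distinct ultrafilters
  have hDex : ∀ m n : ℕ, ∃ Dmn : Set ℕ, m < n → Dmn ∈ Vf m ∧ Dmnᶜ ∈ Vf n := by
    intro m n
    by_cases hmn : m < n
    · have h1 := hniso m n (Nat.ne_of_lt hmn)
      have h2 : ∃ A₀ : Set ℕ, ¬((A₀ ∈ Vf m) ↔ (A₀ ∈ Vf n)) := by
        by_contra hc
        push_neg at hc
        exact h1 ⟨Equiv.refl ℕ, fun A₀ => by simpa using hc A₀⟩
      obtain ⟨A₀, hA₀⟩ := h2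
      by_cases hm : A₀ ∈ Vf m
      · have hn : A₀ ∉ Vf n := fun h => hA₀ ⟨fun _ => h, fun _ => hm⟩
        exact ⟨A₀, fun _ => ⟨hm, (Ultrafilter.compl_mem_iff_notMem).mpr hn⟩⟩
      · have hn : A₀ ∈ Vf n := by
          by_contra hn
          exact hA₀ ⟨fun h => absurd h hm, fun h => absurd h hn⟩
        refine ⟨A₀ᶜ, fun _ => ⟨(Ultrafilter.compl_mem_iff_notMem).mpr hm, ?_⟩⟩
        rwa [compl_compl]
    · exact ⟨∅, fun h => absurd h hmn⟩
  choose D hD using hDex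
  -- corrected sections
  set T : ℕ → Set ℕ := fun n => if n ∈ B then sec A n else {y | n < y} with hTdef
  have hT : ∀ n, T n ∈ Vf n := by
    intro n
    by_cases h : n ∈ B
    · have he : T n = sec A n := if_pos h
      rw [he]; exact h
    · have he : T n = {y | n < y} := if_neg h
      rw [he]
      refine hVle n ?_
      rw [Filter.mem_cofinite]
      refine (Set.finite_Iic n).subset ?_
      intro y hy
      simpa [Set.mem_Iic, Nat.not_lt] using hy
  have hTA : ∀ n, n ∈ B → T n = sec A n := fun n hn => if_pos hn
  -- the shrinking family
  set Y : ℕ → ℕ → Set ℕ := fun m k =>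
    (T m ∩ ⋂ i ∈ Finset.range m, (D i m)ᶜ) ∩ D m (m + 1 + k) with hYdef
  have hIcap : ∀ m, (⋂ i ∈ Finset.range m, (D i m)ᶜ) ∈ Vf m := by
    intro m
    exact (Filter.biInter_finset_mem _).mpr fun i hi => (hD i m (Finset.mem_range.mp hi)).2
  have hYV : ∀ m k, Y m k ∈ Vf m := fun m k =>
    Filter.inter_mem (Filter.inter_mem (hT m) (hIcap m)) ((hD m (m + 1 + k) (by omega)).1)
  have hEex : ∀ m, ∃ E ∈ Vf m, ∀ k, (E \ Y m k).Finite :=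
    fun m => pseudo (Vf m) (hVle m) (hVsel m).2 (Y m) (hYV m)
  choose E hEV hEfin using hEex
  set F : ℕ → Set ℕ := fun m => E m ∩ (T m ∩ ⋂ i ∈ Finset.range m, (D i m)ᶜ) with hFdef
  have hFV : ∀ m, F m ∈ Vf m := fun m =>
    Filter.inter_mem (hEV m) (Filter.inter_mem (hT m) (hIcap m))
  have hFT : ∀ m, F m ⊆ T m := fun m y hy => hy.2.1
  have hFD : ∀ m n, m < n → F n ⊆ (D m n)ᶜ := by
    intro m n h y hy
    have h2 := hy.2.2
    simp only [Set.mem_iInter] at h2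
    exact h2 m (Finset.mem_range.mpr h)
  have hFfin : ∀ m n, m < n → (F m \ D m n).Finite := by
    intro m n h
    refine (hEfin m (n - m - 1)).subset ?_
    rintro y ⟨hy1, hy2⟩
    refine ⟨hy1.1, fun hY => ?_⟩
    have heq : m + 1 + (n - m - 1) = n := by omega
    apply hy2
    rw [← heq]
    exact hY.2
  have hFF : ∀ m n, m ≠ n → (F m ∩ F n).Finite := by
    intro m n hmn
    rcases Nat.lt_or_ge m n with h | h
    · refine (hFfin m n h).subset ?_
      rintro y ⟨h1, h2⟩
      exact ⟨h1, hFD m n h h2⟩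
    · have h' : n < m := lt_of_le_of_ne h (Ne.symm hmn)
      refine (hFfin n m h').subset ?_
      rintro y ⟨h1, h2⟩
      exact ⟨h2, hFD n m h' h1⟩
  -- the disjointified sections
  set S : ℕ → Set ℕ := fun n =>
    F n \ ((⋃ m ∈ Finset.range n, F m) ∪ {y | y ≤ n}) with hSdef
  have hSF : ∀ n, S n ⊆ F n := fun n y hy => hy.1
  have hSV : ∀ n, S n ∈ Vf n := by
    intro n
    have hfin : (F n ∩ ((⋃ m ∈ Finset.range n, F m) ∪ {y | y ≤ n})).Finite := by
      have hsub : F n ∩ ((⋃ m ∈ Finset.range n, F m) ∪ {y | y ≤ n}) ⊆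
          (⋃ m ∈ Finset.range n, F m ∩ F n) ∪ Set.Iic n := by
        rintro y ⟨h1, h2⟩
        rcases h2 with h2 | h2
        · left
          simp only [Set.mem_iUnion] at h2 ⊢
          obtain ⟨m, hm, hym⟩ := h2
          exact ⟨m, hm, hym, h1⟩
        · exact Or.inr h2
      refine Set.Finite.subset (Set.Finite.union ?_ (Set.finite_Iic n)) hsub
      refine Set.Finite.biUnion (Finset.range n).finite_toSet ?_
      intro m hm
      exact hFF m n (Nat.ne_of_lt (Finset.mem_range.mp hm))
    have hmem : (F n ∩ ((⋃ m ∈ Finset.range n, F m) ∪ {y | y ≤ n}))ᶜ ∈ Vf n := by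
      refine hVle n ?_
      rw [Filter.mem_cofinite, compl_compl]
      exact hfin
    refine Filter.mem_of_superset (Filter.inter_mem (hFV n) hmem) ?_
    rintro y ⟨h1, h2⟩
    exact ⟨h1, fun hbad => h2 ⟨h1, hbad⟩⟩
  have hSgt : ∀ n y, y ∈ S n → n < y := by
    intro n y hy
    by_contra h
    exact hy.2 (Or.inr (Nat.le_of_not_lt h))
  have hSdisj : ∀ m n, m ≠ n → ∀ y, y ∈ S m → y ∈ S n → False := by
    have key : ∀ m n, m < n → ∀ y, y ∈ S m → y ∈ S n → False := by
      intro m n h y hym hyn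
      refine hyn.2 (Or.inl ?_)
      simp only [Set.mem_iUnion]
      exact ⟨m, Finset.mem_range.mpr h, hym.1⟩
    intro m n hmn y hym hyn
    rcases Nat.lt_or_ge m n with h | h
    · exact key m n h y hym hyn
    · exact key n m (lt_of_le_of_ne h (Ne.symm hmn)) y hyn hym
  -- the "first coordinate" function on union of the sections
  set f : ℕ → ℕ := fun y => if h : ∃ n, y ∈ S n then h.choose else y with hfdef
  have hfS : ∀ n y, y ∈ S n → f y = n := by
    intro n y hy
    have hex : ∃ n', y ∈ S n' := ⟨n, hy⟩
    have h1 : f y = hex.choose := dif_pos hex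
    rcases eq_or_ne hex.choose n with h | h
    · rw [h1, h]
    · exact (hSdisj _ _ h y hex.choose_spec hy).elim
  have hflt : ∀ n y, y ∈ S n → f y < y := by
    intro n y hy
    rw [hfS n y hy]
    exact hSgt n y hy
  -- a color class in U
  have hcol : ∃ t : Bool, (col f) ⁻¹' {t} ∈ U := by
    rcases Ultrafilter.mem_or_compl_mem U ((col f) ⁻¹' {true}) with h | h
    · exact ⟨true, h⟩
    · refine ⟨false, ?_⟩
      convert h using 1
      ext y
      simp only [Set.mem_preimage, Set.mem_singleton_iff, Set.mem_compl_iff]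
      cases hc : col f y <;> simp
  obtain ⟨t, ht⟩ := hcol
  set C : Set ℕ := B ∩ (col f) ⁻¹' {t} with hCdef
  have hCU : C ∈ U := Filter.inter_mem hBU ht
  have hCcol : ∀ n ∈ C, col f n = t := fun n hn => hn.2
  -- the refined set
  refine ⟨{p : ℕ × ℕ | p.1 ∈ C ∧ p.2 ∈ S p.1}, ?_, ?_, ?_⟩
  · -- A' ⊆ A
    rintro ⟨n, y⟩ ⟨hnC, hyS⟩
    have h1 : y ∈ T n := hFT n (hSF n hyS)
    rw [hTA n hnC.1] at h1
    exact h1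
  · -- A' ∈ W
    rw [hsum]
    refine Filter.mem_of_superset hCU ?_
    intro n hn
    have hsec : sec {p : ℕ × ℕ | p.1 ∈ C ∧ p.2 ∈ S p.1} n = S n := by
      ext y
      simp only [sec, Set.mem_setOf_eq]
      exact ⟨fun h => h.2, fun h => ⟨hn, h⟩⟩
    rw [Set.mem_setOf_eq, hsec]
    exact hSV n
  · -- memP
    have hsec : ∀ n, sec {p : ℕ × ℕ | p.1 ∈ C ∧ p.2 ∈ S p.1} n
        = if n ∈ C then S n else ∅ := by
      intro n
      by_cases h : n ∈ C
      · rw [if_pos h]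
        ext y
        simp only [sec, Set.mem_setOf_eq]
        exact ⟨fun hh => hh.2, fun hh => ⟨h, hh⟩⟩
      · rw [if_neg h]
        ext y
        simp only [sec, Set.mem_setOf_eq, Set.mem_empty_iff_false]
        exact ⟨fun hh => h hh.1, False.elim⟩
    have hSinf : ∀ n, (S n).Infinite := fun n => uf_infinite (hVle n) (hSV n)
    refine ⟨?_, ?_, ?_, ?_, ?_⟩
    · refine Set.Infinite.mono ?_ (uf_infinite hUle hCU)
      intro n hn
      rw [Set.mem_setOf_eq, hsec n, if_pos hn]
      exact hSinf n
    · intro n hne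
      rw [hsec n] at hne ⊢
      by_cases h : n ∈ C
      · rw [if_pos h]
        exact hSinf n
      · rw [if_neg h] at hne
        exact absurd hne (Set.not_nonempty_empty)
    · intro m n hmn
      rw [Set.disjoint_left]
      intro y hym hyn
      rw [hsec m] at hym
      rw [hsec n] at hyn
      by_cases hm : m ∈ C
      · by_cases hn : n ∈ C
        · rw [if_pos hm] at hym
          rw [if_pos hn] at hyn
          exact hSdisj m n hmn y hym hyn
        · rw [if_neg hn] at hyn
          exact hyn
      · rw [if_neg hm] at hym
        exact hym
    · rintro ⟨n, y⟩ ⟨_, hyS⟩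
      exact hSgt n y hyS
    · rintro ⟨n, y⟩ ⟨hnC, hyS⟩ ⟨n', y'⟩ ⟨hnC', hyS'⟩ heq
      simp only at heq
      -- n = y', y' ∈ S n'
      have h1 : f y' = n' := hfS n' y' hyS'
      have h2 : col f y' = !(col f (f y')) := col_spec f y' (hflt n' y' hyS')
      rw [h1, hCcol n' hnC'] at h2
      rw [← heq, hCcol n hnC] at h2
      cases t <;> simp at h2
end

section
/- Let W be an (n,T(n))-weakly Ramsey non-P-point in standard position on ω×ω, let τ be any n-type, and let the set [ω×ω]_τ be partitioned into finitely many pieces. Then there is a set H ∈ W such that [H]_τ is included in one of the pieces. -/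
open Filter Set

/-!
Colour an `n`-element set `s` by the pair (the type `s` realizes, `c s`). In every set of a
non-P-point in standard position infinitely many columns are infinite, and a set with infinitely
many infinite columns realizes every `n`-type (choose the values of the symbols in increasing
order: an `x` is an infinite column, a `y` a large point of the column of its `x`). Hence a set
`H ∈ W` meeting at most `T n` colours meets exactly one colour per type, so `c` is constant on
the realizations of `τ` inside `H`.
-/

section PreorderRank

variable {α : Type*} (τ : α → α → Prop)

noncomputable def preorderRank (u : α) : ℕ := {w | τ w u ∧ ¬ τ u w}.ncard

variable [Finite α]

lemma preorderRank_le_iff (htrans : ∀ u v w, τ u v → τ v w → τ u w)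
    (htotal : ∀ u v, τ u v ∨ τ v u) (u v : α) :
    τ u v ↔ preorderRank τ u ≤ preorderRank τ v := by
  constructor
  · intro huv
    refine ncard_le_ncard (fun w ⟨hwu, huw⟩ => ⟨htrans _ _ _ hwu huv, ?_⟩) (toFinite _)
    exact fun hvw => huw (htrans _ _ _ huv hvw)
  · intro hle
    by_contra huv
    have hvu : τ v u := (htotal u v).resolve_left huv
    have hssub : {w | τ w v ∧ ¬ τ v w} ⊂ {w | τ w u ∧ ¬ τ u w} := by
      refine ⟨fun w ⟨hwv, hvw⟩ => ⟨htrans _ _ _ hwv hvu, fun huw => hvw (htrans _ _ _ hvu huw)⟩,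
        fun hsup => (hsup ⟨hvu, huv⟩).2 ((htotal v v).elim id id)⟩
    exact hle.not_gt (ncard_lt_ncard hssub (toFinite _))

lemma preorderRank_lt_card (u : α) : preorderRank τ u < Nat.card α := by
  rw [← ncard_univ]
  refine ncard_lt_ncard (ssubset_univ_iff.2 fun h => ?_)
  have hu : u ∈ {w | τ w u ∧ ¬ τ u w} := h ▸ mem_univ u
  exact hu.2 hu.1

end PreorderRank

lemma exists_strictMonoOn_forall_mem (F : (ℕ → ℕ) → ℕ → Set ℕ)
    (hlocal : ∀ v w s, (∀ t < s, v t = w t) → F v s = F w s)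
    (hinf : ∀ v s, (∀ t < s, v t ∈ F v t) → (F v s).Infinite) (N : ℕ) :
    ∃ v : ℕ → ℕ, StrictMonoOn v (Iio N) ∧ ∀ s < N, v s ∈ F v s := by
  induction N with
  | zero => exact ⟨id, strictMono_id.strictMonoOn _, by simp⟩
  | succ N ih =>
    obtain ⟨v, hmono, hmem⟩ := ih
    obtain ⟨y, hyF, hy⟩ := (hinf v N hmem).exists_gt ((Finset.range N).sup v)
    have hlt : ∀ t < N, v t < y := fun t ht =>
      (Finset.le_sup (Finset.mem_range.2 ht)).trans_lt hy
    have hagree : ∀ s ≤ N, ∀ t < s, Function.update v N y t = v t := fun s hs t ht =>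
      Function.update_of_ne (by omega) _ _
    refine ⟨Function.update v N y, fun s hs t ht hst => ?_, fun s hs => ?_⟩
    · rw [hagree t (Nat.lt_succ_iff.1 ht) s hst]
      rcases (Nat.lt_succ_iff.1 ht).lt_or_eq with htN | rfl
      · rw [hagree N le_rfl t htN]
        exact hmono (mem_Iio.2 (hst.trans htN)) htN hst
      · rw [Function.update_self]
        exact hlt s hst
    · rw [hlocal _ v s (hagree s (Nat.lt_succ_iff.1 hs))]
      rcases (Nat.lt_succ_iff.1 hs).lt_or_eq with hsN | rfl
      · rw [hagree N le_rfl s hsN]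
        exact hmem s hsN
      · rwa [Function.update_self]

def heavyCols (A : Set (ℕ × ℕ)) : Set ℕ := {m | (sec A m).Infinite}

lemma setOf_mem_and_fst_eq (A : Set (ℕ × ℕ)) (m : ℕ) :
    {p : ℕ × ℕ | p ∈ A ∧ p.1 = m} = Prod.mk m '' sec A m := by
  ext ⟨a, b⟩
  simp only [sec, mem_image, Prod.mk.injEq, mem_ofPred_eq]
  aesop

lemma StdNonPpoint.infinite_heavyCols {W : Ultrafilter (ℕ × ℕ)} (hW : StdNonPpoint W)
    {A : Set (ℕ × ℕ)} (hA : A ∈ W) : (heavyCols A).Infinite := by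
  intro hfin
  have hlight : (Prod.fst ⁻¹' heavyCols A)ᶜ ∈ W := by
    refine Ultrafilter.compl_mem_iff_notMem.2 fun h => ?_
    obtain ⟨m, -, hm⟩ := Ultrafilter.eq_pure_of_finite_mem hfin (Ultrafilter.mem_map.2 h)
    have hcol : Prod.fst ⁻¹' {m} ∈ W := by
      rw [← Ultrafilter.mem_map, hm]
      exact mem_pure.2 rfl
    exact (hW.2 _ hcol).2 ⟨m, fun p hp => hp⟩
  set A' := A ∩ (Prod.fst ⁻¹' heavyCols A)ᶜ
  obtain ⟨m, hm⟩ := not_forall.1 (hW.2 A' (inter_mem hA hlight)).1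
  rw [setOf_mem_and_fst_eq, ← Set.Infinite,
    infinite_image_iff (Prod.mk_right_injective m).injOn] at hm
  obtain ⟨y, hy⟩ := hm.nonempty
  exact hy.2 (hm.mono fun z hz => hz.1)

lemma symVal_comp {n : ℕ} (v : ℕ → ℕ) (r : Symb n → ℕ) (u : Symb n) :
    symVal (fun i => v (r (Sum.inl i))) (fun i => v (r (Sum.inr i))) u = v (r u) := by
  cases u <;> rfl

lemma exists_subset_realizes {n : ℕ} {A : Set (ℕ × ℕ)} (hA : (heavyCols A).Infinite)
    {τ : Symb n → Symb n → Prop} (hτ : IsNType n τ) : ∃ s ⊆ A, Realizes τ s := by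
  classical
  set r := preorderRank τ
  have hr : ∀ u v, τ u v ↔ r u ≤ r v := preorderRank_le_iff τ hτ.trans hτ.total
  have hxy : ∀ i, r (Sum.inl i) < r (Sum.inr i) := fun i =>
    not_le.1 ((hr _ _).not.1 (hτ.x_lt_y i).2)
  have hyy : StrictMono fun i => r (Sum.inr i) := fun i j hij =>
    not_le.1 ((hr _ _).not.1 (hτ.y_lt i j hij).2)
  have hx_ne_y : ∀ i j, r (Sum.inl i) ≠ r (Sum.inr j) := fun i j h => by
    obtain ⟨-, ⟨j', hj'⟩⟩ :=
      hτ.equiv_xx _ _ Sum.inl_ne_inr ((hr _ _).2 h.le) ((hr _ _).2 h.ge)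
    exact Sum.inr_ne_inl hj'
  let F : (ℕ → ℕ) → ℕ → Set ℕ := fun v s =>
    if h : ∃ i, r (Sum.inr i) = s then sec A (v (r (Sum.inl h.choose))) else heavyCols A
  have hF_x : ∀ v i, F v (r (Sum.inl i)) = heavyCols A := fun v i =>
    dif_neg fun ⟨j, hj⟩ => hx_ne_y i j hj.symm
  have hF_y : ∀ v i, F v (r (Sum.inr i)) = sec A (v (r (Sum.inl i))) := fun v i => by
    have h : ∃ j, r (Sum.inr j) = r (Sum.inr i) := ⟨i, rfl⟩
    simp only [F, dif_pos h, hyy.injective h.choose_spec]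
  have hlocal : ∀ v w s, (∀ t < s, v t = w t) → F v s = F w s := by
    intro v w s hvw
    simp only [F]
    split_ifs with h
    · rw [hvw _ ((hxy _).trans_eq h.choose_spec)]
    · rfl
  have hinf : ∀ v s, (∀ t < s, v t ∈ F v t) → (F v s).Infinite := by
    intro v s hv
    simp only [F]
    split_ifs with h
    · have hcol := hv _ ((hxy _).trans_eq h.choose_spec)
      rwa [hF_x] at hcol
    · exact hA
  obtain ⟨v, hv, hvF⟩ := exists_strictMonoOn_forall_mem F hlocal hinf (Nat.card (Symb n))
  have hrN : ∀ u, r u ∈ Iio (Nat.card (Symb n)) := preorderRank_lt_card τ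
  refine ⟨_, ?_, fun i => v (r (Sum.inl i)), fun i => v (r (Sum.inr i)),
    fun i j hij => hv (hrN _) (hrN _) (hyy hij), rfl, fun u w => ?_⟩
  · rintro _ ⟨i, rfl⟩
    have hy := hvF _ (hrN (Sum.inr i))
    rwa [hF_y] at hy
  · rw [symVal_comp, symVal_comp, hv.le_iff_le (hrN u) (hrN w), hr]

namespace Realizes

variable {n : ℕ} {τ : Symb n → Symb n → Prop} {s : Set (ℕ × ℕ)}

lemma finite (h : Realizes τ s) : s.Finite := by
  obtain ⟨a, b, -, rfl, -⟩ := h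
  exact finite_range _

lemma ncard_eq (h : Realizes τ s) : s.ncard = n := by
  obtain ⟨a, b, hb, rfl, -⟩ := h
  rw [ncard_range_of_injective fun i j hij => hb.injective (congrArg Prod.snd hij), Nat.card_fin]

lemma unique {τ' : Symb n → Symb n → Prop} (h : Realizes τ s) (h' : Realizes τ' s) : τ = τ' := by
  obtain ⟨a, b, hb, rfl, hτ⟩ := h
  obtain ⟨a', b', hb', hs, hτ'⟩ := h'
  have hbb' : b = b' := by
    refine (hb.range_inj hb').1 ?_
    simpa only [← range_comp, Function.comp_def] using congrArg (Prod.snd '' ·) hs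
  subst hbb'
  have haa' : a = a' := funext fun i => by
    obtain ⟨j, hj⟩ : (a i, b i) ∈ range fun i => (a' i, b i) := hs ▸ ⟨i, rfl⟩
    obtain rfl := hb.injective (congrArg Prod.snd hj)
    exact (congrArg Prod.fst hj).symm
  subst haa'
  funext u w
  exact propext ((hτ u w).trans (hτ' u w).symm)

end Realizes

abbrev NType (n : ℕ) := {τ : Symb n → Symb n → Prop // IsNType n τ}

noncomputable def typeOf {n : ℕ} [Nonempty (NType n)] (s : Set (ℕ × ℕ)) : NType n :=
  Classical.epsilon fun σ => Realizes σ.1 s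

lemma typeOf_eq {n : ℕ} [Nonempty (NType n)] {σ : NType n} {s : Set (ℕ × ℕ)}
    (h : Realizes σ.1 s) : typeOf s = σ :=
  Subtype.ext <|
    (Classical.epsilon_spec (p := fun σ : NType n => Realizes σ.1 s) ⟨σ, h⟩).unique h

/-- type homogeneity for (n,T(n))-weakly Ramsey non-P-points in
standard position. -/
theorem stmt1 (n : ℕ) (W : Ultrafilter (ℕ × ℕ)) (hstd : StdNonPpoint W)
    (hwr : WeaklyRamsey W n (T n)) (τ : Symb n → Symb n → Prop) (hτ : IsNType n τ)
    (k : ℕ) (c : Set (ℕ × ℕ) → Fin k) :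
    ∃ H ∈ W, ∃ i : Fin k, ∀ s : Set (ℕ × ℕ), s ⊆ H → Realizes τ s → c s = i := by
  have : Nonempty (NType n) := ⟨⟨τ, hτ⟩⟩
  let e := Finite.equivFin (NType n × Fin k)
  obtain ⟨H, hHW, hHcard⟩ := hwr _ fun s => e (typeOf s, c s)
  choose S hSH hS using fun σ : NType n =>
    exists_subset_realizes (hstd.infinite_heavyCols hHW) σ.2
  let φ : NType n → Fin _ := fun σ => e (σ, c (S σ))
  have hφ : Function.Injective φ := fun σ σ' h => congrArg Prod.fst (e.injective h)
  have hcolours : range φ =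
      {i | ∃ s, s ⊆ H ∧ s.Finite ∧ s.ncard = n ∧ e (typeOf s, c s) = i} := by
    refine eq_of_subset_of_ncard_le ?_ (by rwa [ncard_range_of_injective hφ])
    rintro _ ⟨σ, rfl⟩
    exact ⟨S σ, hSH σ, (hS σ).finite, (hS σ).ncard_eq, by rw [typeOf_eq (hS σ)]⟩
  refine ⟨H, hHW, c (S ⟨τ, hτ⟩), fun s hsH hs => ?_⟩
  obtain ⟨σ, hσ⟩ : e (typeOf s, c s) ∈ range φ :=
    hcolours ▸ ⟨s, hsH, hs.finite, hs.ncard_eq, rfl⟩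
  rw [typeOf_eq (σ := ⟨τ, hτ⟩) hs] at hσ
  obtain ⟨rfl, hcs⟩ := Prod.ext_iff.1 (e.injective hσ)
  exact hcs.symm
end

section
/- Let W be a nonprincipal ultrafilter on ω×ω having a basis of sets from 𝔓 (every set in W has a subset belonging to W ∩ 𝔓). If for every n-type τ and every partition of [ω×ω]_τ into finitely many pieces there is H ∈ W with [H]_τ included in one piece, then W is (n,T(n))-weakly Ramsey. -/
open Filter Set

lemma realizes_of_subset (n : ℕ) (A : Set (ℕ × ℕ)) (hA : memP A)
    (s : Set (ℕ × ℕ)) (hsA : s ⊆ A) (hfin : s.Finite) (hcard : s.ncard = n) :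
    ∃ τ : Symb n → Symb n → Prop, IsNType n τ ∧ Realizes τ s := by
  obtain ⟨-, -, hdisj, hlt, hneq⟩ := hA
  -- snd is injective on s
  have hinj : InjOn Prod.snd s := by
    intro p hp q hq h
    by_cases hf : p.1 = q.1
    · exact Prod.ext hf h
    · exact absurd (Set.disjoint_left.mp (hdisj p.1 q.1 hf) (hsA hp))
        (by simpa [sec, h, Prod.mk.eta] using (hsA hq : q ∈ A))
  classical
  set F : Finset (ℕ × ℕ) := hfin.toFinset with hF
  have hFcard : F.card = n := by rw [hF, ← hcard, Set.ncard_eq_toFinset_card s hfin]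
  set G : Finset ℕ := F.image Prod.snd with hG
  have hGcard : G.card = n := by
    rw [hG, Finset.card_image_of_injOn (by simpa [hF] using hinj), hFcard]
  set e := G.orderIsoOfFin hGcard with he
  set b : Fin n → ℕ := fun i => (e i : ℕ) with hb
  have hbmono : StrictMono b := fun i j hij => by
    exact_mod_cast e.strictMono hij
  have hmem : ∀ i : Fin n, ∃ p ∈ s, p.2 = b i := by
    intro i
    have : (b i) ∈ G := (e i).2
    rw [hG, Finset.mem_image] at this
    obtain ⟨p, hp, hp2⟩ := this
    exact ⟨p, by simpa [hF] using hp, hp2⟩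
  choose P hP1 hP2 using hmem
  set a : Fin n → ℕ := fun i => (P i).1 with ha
  have hab : ∀ i, (a i, b i) ∈ s := fun i => by
    have : (a i, b i) = P i := Prod.ext rfl (hP2 i).symm
    rw [this]; exact hP1 i
  have hrange : s = Set.range (fun i => (a i, b i)) := by
    apply Set.Subset.antisymm
    · intro p hp
      have hpG : p.2 ∈ G := by
        rw [hG, Finset.mem_image]; exact ⟨p, by simpa [hF] using hp, rfl⟩
      obtain ⟨i, hi⟩ := e.surjective ⟨p.2, hpG⟩
      have hbi : b i = p.2 := by simp [hb, hi]
      have : p = (a i, b i) := hinj hp (hab i) hbi.symm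
      exact ⟨i, this.symm⟩
    · rintro p ⟨i, rfl⟩; exact hab i
  refine ⟨fun u v => symVal a b u ≤ symVal a b v, ?_, a, b, hbmono, hrange, fun u v => Iff.rfl⟩
  constructor
  · exact fun u => le_refl _
  · exact fun u v w => le_trans
  · exact fun u v => le_total _ _
  · intro i j hij
    exact ⟨(hbmono hij).le, not_le.mpr (hbmono hij)⟩
  · intro i
    have := hlt _ (hsA (hab i))
    exact ⟨this.le, not_le.mpr this⟩
  · intro u v huv h1 h2
    have heq : symVal a b u = symVal a b v := le_antisymm h1 h2
    rcases u with i | i <;> rcases v with j | j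
    · exact ⟨⟨i, rfl⟩, ⟨j, rfl⟩⟩
    · exact absurd heq (hneq _ (hsA (hab i)) _ (hsA (hab j)))
    · exact absurd heq.symm (hneq _ (hsA (hab j)) _ (hsA (hab i)))
    · exact absurd (hbmono.injective heq) (by simpa using huv)

/-- for an ultrafilter with a basis of sets from 𝔓, type homogeneity for
all n-types implies (n,T(n))-weak Ramseyness. -/
theorem stmt2 (n : ℕ) (W : Ultrafilter (ℕ × ℕ))
    (hnp : (W : Filter (ℕ × ℕ)) ≤ Filter.cofinite)
    (hbasis : ∀ A ∈ W, ∃ A' : Set (ℕ × ℕ), A' ⊆ A ∧ A' ∈ W ∧ memP A')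
    (hhom : ∀ τ : Symb n → Symb n → Prop, IsNType n τ →
      ∀ (k : ℕ) (c : Set (ℕ × ℕ) → Fin k),
        ∃ H ∈ W, ∃ i : Fin k, ∀ s : Set (ℕ × ℕ), s ⊆ H → Realizes τ s → c s = i) :
    WeaklyRamsey W n (T n) := by
  intro k c
  classical
  set TT := {τ : Symb n → Symb n → Prop // IsNType n τ}
  have : ∀ τ : TT, ∃ H ∈ W, ∃ i : Fin k,
      ∀ s : Set (ℕ × ℕ), s ⊆ H → Realizes τ.1 s → c s = i :=
    fun τ => hhom τ.1 τ.2 k c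
  choose H hHW i hi using this
  have hH0 : (⋂ τ : TT, H τ) ∈ W := by
    rw [← Ultrafilter.mem_coe, Filter.iInter_mem]; exact hHW
  obtain ⟨A, hA0, hAW, hAP⟩ := hbasis _ hH0
  refine ⟨A, hAW, ?_⟩
  have hsub : {j : Fin k | ∃ s : Set (ℕ × ℕ), s ⊆ A ∧ s.Finite ∧ s.ncard = n ∧ c s = j}
      ⊆ i '' Set.univ := by
    rintro j ⟨s, hsA, hfin, hcard, hcs⟩
    obtain ⟨τ, hτ, hreal⟩ := realizes_of_subset n A hAP s hsA hfin hcard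
    refine ⟨⟨τ, hτ⟩, trivial, ?_⟩
    rw [← hcs]
    exact (hi ⟨τ, hτ⟩ s (fun p hp => Set.mem_iInter.mp (hA0 (hsA hp)) ⟨τ, hτ⟩) hreal).symm
  calc _ ≤ (i '' Set.univ).ncard := Set.ncard_le_ncard hsub (Set.toFinite _)
    _ ≤ (Set.univ : Set TT).ncard := Set.ncard_image_le (Set.toFinite _)
    _ = T n := by rw [Set.ncard_univ]; rfl
end

section
/- If W is an (n,T(n))-weakly Ramsey non-P-point in standard position on ω×ω, then there is a set P ∈ W such that every n-element subset of P realizes an n-type. -/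
open Filter Set

/-! Colour each `n`-subset of `ω × ω` by the `n`-type it realizes (an `n`-set realizes at most
one), or by one extra colour if it realizes none: `T(n) + 1` colours. Since `π₁` is neither
finite-to-one nor constant on any set of `W`, every set of `W` has infinitely many infinite vertical
sections, and inside such a set every `n`-type is realized, choosing the values rank by rank.
Hence a set of `W` whose `n`-subsets meet at most `T(n)` colours sees all `T(n)` type colours and
no `n`-subset of the extra colour. -/

theorem exists_rank_of_total {α : Type*} [Fintype α] {r : α → α → Prop}
    (htrans : ∀ u v w, r u v → r v w → r u w) (htotal : ∀ u v, r u v ∨ r v u) :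
    ∃ rank : α → ℕ, ∀ u v, r u v ↔ rank u ≤ rank v := by
  classical
  refine ⟨fun u => (Finset.univ.filter (r · u)).card, fun u v => ⟨fun huv => ?_, fun hle => ?_⟩⟩
  · exact Finset.card_le_card fun w hw => by
      simp only [Finset.mem_filter, Finset.mem_univ, true_and] at hw ⊢
      exact htrans _ _ _ hw huv
  · by_contra huv
    have hvu : r v u := (htotal u v).resolve_left huv
    refine hle.not_gt (Finset.card_lt_card ⟨fun w hw => ?_, fun hsub => huv ?_⟩)
    · simp only [Finset.mem_filter, Finset.mem_univ, true_and] at hw ⊢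
      exact htrans _ _ _ hw hvu
    · simpa using hsub (by simpa using (htotal u u).elim id id)

theorem exists_strictMonoOn_pairs_mem {ι : Type*} {H : Set (ℕ × ℕ)}
    (hC : {m | (sec H m).Infinite}.Infinite) {p q : ι → ℕ} (hq : Function.Injective q)
    (hpq : ∀ i, p i < q i) (hp : ∀ i j, p i ≠ q j) (N : ℕ) :
    ∃ v : ℕ → ℕ, StrictMonoOn v (Iio N) ∧ (∀ k < N, k ∉ range q → (sec H (v k)).Infinite) ∧
      ∀ i, q i < N → (v (p i), v (q i)) ∈ H := by
  induction N with
  | zero => exact ⟨id, by simp [StrictMonoOn], by simp, by simp⟩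
  | succ N ih =>
    obtain ⟨v, hmono, hcol, hpair⟩ := ih
    let B := (Finset.range N).sup v
    -- `v N` goes into the column of `v (p i)` when `N = q i`, and into an infinite column otherwise
    have hnext : ∃ x, B < x ∧ (N ∉ range q → (sec H x).Infinite) ∧
        ∀ i, q i = N → (v (p i), x) ∈ H := by
      by_cases hN : N ∈ range q
      · obtain ⟨i, hi⟩ := hN
        have hcoli : (sec H (v (p i))).Infinite :=
          hcol _ (hi ▸ hpq i) fun ⟨j, hj⟩ => hp i j hj.symm
        obtain ⟨x, hx, hBx⟩ := hcoli.exists_gt B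
        exact ⟨x, hBx, fun h => (h ⟨i, hi⟩).elim, fun j hj => hq (hj.trans hi.symm) ▸ hx⟩
      · obtain ⟨x, hx, hBx⟩ := hC.exists_gt B
        exact ⟨x, hBx, fun _ => hx, fun j hj => (hN ⟨j, hj⟩).elim⟩
    obtain ⟨x, hBx, hxcol, hxpair⟩ := hnext
    have hlt : ∀ k < N, v k < x := fun k hk =>
      (Finset.le_sup (Finset.mem_range.2 hk)).trans_lt hBx
    refine ⟨Function.update v N x, ?_, ?_, ?_⟩
    · intro a ha b hb hab
      have ha' : a < N := by simp only [mem_Iio] at hb; omega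
      rw [Function.update_of_ne ha'.ne]
      rcases (Nat.lt_succ_iff.1 hb).lt_or_eq with hb' | rfl
      · rw [Function.update_of_ne hb'.ne]; exact hmono ha' hb' hab
      · rw [Function.update_self]; exact hlt a ha'
    · intro k hk hkq
      rcases (Nat.lt_succ_iff.1 hk).lt_or_eq with hk' | rfl
      · rw [Function.update_of_ne hk'.ne]; exact hcol k hk' hkq
      · rw [Function.update_self]; exact hxcol hkq
    · intro i hi
      rw [Function.update_of_ne ((hpq i).trans_le (Nat.lt_succ_iff.1 hi)).ne]
      rcases (Nat.lt_succ_iff.1 hi).lt_or_eq with hi' | hi'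
      · rw [Function.update_of_ne hi'.ne]; exact hpair i hi'
      · rw [hi', Function.update_self]; exact hxpair i hi'

theorem IsNType.exists_subset_realizes {n : ℕ} {τ : Symb n → Symb n → Prop} (ht : IsNType n τ)
    {H : Set (ℕ × ℕ)} (hC : {m | (sec H m).Infinite}.Infinite) :
    ∃ s ⊆ H, s.Finite ∧ s.ncard = n ∧ Realizes τ s := by
  obtain ⟨r, hr⟩ := exists_rank_of_total ht.trans ht.total
  have hr_lt {u w} (h : τ u w) (h' : ¬ τ w u) : r u < r w :=
    lt_of_le_not_ge ((hr _ _).1 h) (mt (hr _ _).2 h')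
  have hy : StrictMono (r ∘ Sum.inr) := fun i j hij => hr_lt (ht.y_lt i j hij).1 (ht.y_lt i j hij).2
  have hxy i : r (Sum.inl i) < r (Sum.inr i) := hr_lt (ht.x_lt_y i).1 (ht.x_lt_y i).2
  have hx_ne_y i j : r (Sum.inl i) ≠ r (Sum.inr j) := fun h => by
    obtain ⟨-, k, hk⟩ := ht.equiv_xx _ _ Sum.inl_ne_inr ((hr _ _).2 h.le) ((hr _ _).2 h.ge)
    cases hk
  let N := Finset.univ.sup r + 1
  have hN u : r u ∈ Iio N := Nat.lt_succ_of_le (Finset.le_sup (Finset.mem_univ u))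
  obtain ⟨v, hv, -, hpair⟩ := exists_strictMonoOn_pairs_mem hC hy.injective hxy hx_ne_y N
  let a i := v (r (Sum.inl i))
  let b i := v (r (Sum.inr i))
  have hb : StrictMono b := fun i j hij => hv (hN _) (hN _) (hy hij)
  refine ⟨range fun i => (a i, b i), range_subset_iff.2 fun i => hpair i (hN _), finite_range _,
    ?_, a, b, hb, rfl, fun u w => (hr u w).trans ?_⟩
  · rw [ncard_range_of_injective fun i j h => hb.injective (congrArg Prod.snd h),
      Nat.card_eq_fintype_card, Fintype.card_fin]
  · cases u <;> cases w <;> exact (hv.le_iff_le (hN _) (hN _)).symm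

theorem Realizes.unique_s3 {n : ℕ} {τ τ' : Symb n → Symb n → Prop} {s : Set (ℕ × ℕ)}
    (h : Realizes τ s) (h' : Realizes τ' s) : τ = τ' := by
  obtain ⟨a, b, hb, rfl, hiff⟩ := h
  obtain ⟨a', b', hb', hs, hiff'⟩ := h'
  obtain rfl : b = b' := by
    refine (hb.range_inj hb').1 ?_
    simpa [← range_comp, Function.comp_def] using congrArg (Prod.snd '' ·) hs
  obtain rfl : a = a' := funext fun i => by
    obtain ⟨j, hj⟩ : (a' i, b i) ∈ range fun i => (a i, b i) := hs ▸ mem_range_self i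
    obtain rfl := hb.injective (congrArg Prod.snd hj)
    exact congrArg Prod.fst hj
  exact funext₂ fun u v => propext ((hiff u v).trans (hiff' u v).symm)

theorem StdNonPpoint.infinite_setOf_sec_infinite {W : Ultrafilter (ℕ × ℕ)} (hstd : StdNonPpoint W)
    {H : Set (ℕ × ℕ)} (hH : H ∈ W) : {m | (sec H m).Infinite}.Infinite := by
  intro hfin
  set C := {m | (sec H m).Infinite}
  by_cases hC : Prod.fst ⁻¹' C ∈ W
  · obtain ⟨m, -, hm⟩ := Ultrafilter.eq_pure_of_finite_mem hfin (Ultrafilter.mem_map.2 hC)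
    have hcol : Prod.fst ⁻¹' {m} ∈ W := by
      rw [← Ultrafilter.mem_map, hm]
      exact mem_singleton m
    exact (hstd.2 _ hcol).2 ⟨m, fun p hp => hp⟩
  · refine (hstd.2 _ (inter_mem hH (Ultrafilter.compl_mem_iff_notMem.2 hC))).1 fun m => ?_
    by_cases hm : m ∈ C
    · exact finite_empty.subset fun p ⟨⟨_, hp⟩, hpm⟩ => hp (by rwa [mem_preimage, hpm])
    · refine ((not_infinite.1 hm).image (m, ·)).subset ?_
      rintro ⟨_, y⟩ ⟨⟨hp, -⟩, rfl⟩
      exact ⟨y, hp, rfl⟩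

theorem WeaklyRamsey.exists_forall_exists_of_unavoidable {α ι : Type} [Finite ι]
    {U : Ultrafilter α} {n : ℕ} (hU : WeaklyRamsey U n (Nat.card ι)) (Q : ι → Set α → Prop)
    (hQ : ∀ s i j, Q i s → Q j s → i = j)
    (hunavoid : ∀ H ∈ U, ∀ i, ∃ s ⊆ H, s.Finite ∧ s.ncard = n ∧ Q i s) :
    ∃ H ∈ U, ∀ s ⊆ H, s.Finite → s.ncard = n → ∃ i, Q i s := by
  classical
  let e := Finite.equivFin (Option ι)
  let colour : Set α → Option ι := fun s => if h : ∃ i, Q i s then some h.choose else none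
  obtain ⟨H, hH, hcount⟩ := hU _ (e ∘ colour)
  refine ⟨H, hH, fun s₀ hs₀H hs₀fin hs₀card => ?_⟩
  by_contra hbad
  have hall : {c | ∃ s : Set α, s ⊆ H ∧ s.Finite ∧ s.ncard = n ∧ (e ∘ colour) s = c} = univ := by
    refine eq_univ_of_forall fun c => ?_
    obtain ⟨o, rfl⟩ := e.surjective c
    cases o with
    | none => exact ⟨s₀, hs₀H, hs₀fin, hs₀card, by simp [colour, hbad]⟩
    | some i =>
      obtain ⟨s, hsH, hsfin, hscard, hs⟩ := hunavoid H hH i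
      have hex : ∃ j, Q j s := ⟨i, hs⟩
      exact ⟨s, hsH, hsfin, hscard, by simp [colour, hex, hQ s _ _ hex.choose_spec hs]⟩
  rw [hall, ncard_univ, Nat.card_eq_fintype_card, Fintype.card_fin, Finite.card_option] at hcount
  omega

/-- an (n,T(n))-weakly Ramsey non-P-point in standard position contains a
set all of whose n-element subsets realize n-types. -/
theorem stmt3 (n : ℕ) (W : Ultrafilter (ℕ × ℕ)) (hstd : StdNonPpoint W)
    (hwr : WeaklyRamsey W n (T n)) :
    ∃ P ∈ W, ∀ s : Set (ℕ × ℕ), s ⊆ P → s.Finite → s.ncard = n →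
      ∃ τ : Symb n → Symb n → Prop, IsNType n τ ∧ Realizes τ s := by
  obtain ⟨P, hP, hreal⟩ := hwr.exists_forall_exists_of_unavoidable
    (fun (σ : {τ // IsNType n τ}) s => Realizes σ.1 s)
    (fun _ _ _ h h' => Subtype.ext (h.unique_s3 h'))
    (fun _ hH σ => σ.2.exists_subset_realizes (hstd.infinite_setOf_sec_infinite hH))
  refine ⟨P, hP, fun s hsP hs hcard => ?_⟩
  obtain ⟨σ, hσ⟩ := hreal s hsP hs hcard
  exact ⟨σ.1, σ.2, hσ⟩
end

section
/- If a non-P-point W in standard position on ω×ω is (2,4)-weakly Ramsey, then W has the three-functions property: every function f: ω×ω → ω is, when restricted to some set H ∈ W, either constant, or one-to-one, or of the form g∘π₁ for some one-to-one g: ω→ω. -/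
open Filter Set

namespace Stmt5Aux

/-- Class of an ordered pair of points (a the lower one, i.e. `a.2 < b.2`):
same column ↦ 1/2, crossing ↦ 3/4, increasing-low ↦ 5/6, increasing-high ↦ 7/8,
degenerate ↦ 0; eq/neq of `f`-values chooses within each pair. -/
def pcAux (f : ℕ × ℕ → ℕ) (a b : ℕ × ℕ) : Fin 9 :=
  if b.1 = a.1 then (if f a = f b then 1 else 2)
  else if b.1 < a.1 then (if f a = f b then 3 else 4)
  else if b.1 < a.2 then (if f a = f b then 5 else 6)
  else if b.1 = a.2 then 0
  else (if f a = f b then 7 else 8)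

def pc (f : ℕ × ℕ → ℕ) (u v : ℕ × ℕ) : Fin 9 :=
  if u.2 < v.2 then pcAux f u v else if v.2 < u.2 then pcAux f v u else 0

lemma pc_symm (f : ℕ × ℕ → ℕ) (u v : ℕ × ℕ) : pc f u v = pc f v u := by
  unfold pc
  rcases lt_trichotomy u.2 v.2 with h | h | h
  · rw [if_pos h, if_neg (lt_asymm h), if_pos h]
  · rw [if_neg (by omega : ¬ u.2 < v.2), if_neg (by omega : ¬ v.2 < u.2),
      if_neg (by omega : ¬ v.2 < u.2), if_neg (by omega : ¬ u.2 < v.2)]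
  · rw [if_neg (lt_asymm h), if_pos h, if_pos h]

lemma pc_of_lt (f : ℕ × ℕ → ℕ) (u v : ℕ × ℕ) (h : u.2 < v.2) : pc f u v = pcAux f u v := by
  rw [pc, if_pos h]

lemma pc_of_eq (f : ℕ × ℕ → ℕ) (u v : ℕ × ℕ) (h : u.2 = v.2) : pc f u v = 0 := by
  rw [pc, if_neg (by omega : ¬ u.2 < v.2), if_neg (by omega : ¬ v.2 < u.2)]

lemma pcAux_samecol (f : ℕ × ℕ → ℕ) (a b : ℕ × ℕ) (h : b.1 = a.1) :
    pcAux f a b = if f a = f b then 1 else 2 := by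
  rw [pcAux, if_pos h]

lemma pcAux_cr (f : ℕ × ℕ → ℕ) (a b : ℕ × ℕ) (h : b.1 < a.1) :
    pcAux f a b = if f a = f b then 3 else 4 := by
  rw [pcAux, if_neg (by omega : ¬ b.1 = a.1), if_pos h]

lemma pcAux_il (f : ℕ × ℕ → ℕ) (a b : ℕ × ℕ) (h1 : a.1 < b.1) (h2 : b.1 < a.2) :
    pcAux f a b = if f a = f b then 5 else 6 := by
  rw [pcAux, if_neg (by omega : ¬ b.1 = a.1), if_neg (by omega : ¬ b.1 < a.1), if_pos h2]

lemma pcAux_ih (f : ℕ × ℕ → ℕ) (a b : ℕ × ℕ) (h0 : a.1 < a.2) (h1 : a.2 < b.1) :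
    pcAux f a b = if f a = f b then 7 else 8 := by
  rw [pcAux, if_neg (by omega : ¬ b.1 = a.1), if_neg (by omega : ¬ b.1 < a.1),
    if_neg (by omega : ¬ b.1 < a.2), if_neg (by omega : ¬ b.1 = a.2)]

open Classical in
/-- The coloring of all subsets of `ω × ω` induced by `pc`. -/
noncomputable def colr (f : ℕ × ℕ → ℕ) (s : Set (ℕ × ℕ)) : Fin 9 :=
  if h : ∃ u ∈ s, ∃ v ∈ s, u ≠ v then
    pc f h.choose h.choose_spec.2.choose
  else 0

lemma colr_pair (f : ℕ × ℕ → ℕ) {p q : ℕ × ℕ} (hpq : p ≠ q) :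
    colr f {p, q} = pc f p q := by
  classical
  have h : ∃ u ∈ ({p, q} : Set (ℕ × ℕ)), ∃ v ∈ ({p, q} : Set (ℕ × ℕ)), u ≠ v :=
    ⟨p, Set.mem_insert _ _, q, Set.mem_insert_of_mem _ rfl, hpq⟩
  rw [colr, dif_pos h]
  have hu : h.choose ∈ ({p, q} : Set (ℕ × ℕ)) := h.choose_spec.1
  have hv : h.choose_spec.2.choose ∈ ({p, q} : Set (ℕ × ℕ)) := h.choose_spec.2.choose_spec.1
  have hne : h.choose ≠ h.choose_spec.2.choose := h.choose_spec.2.choose_spec.2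
  simp only [Set.mem_insert_iff, Set.mem_singleton_iff] at hu hv
  rcases hu with hu | hu <;> rcases hv with hv | hv
  · exact absurd (hu.trans hv.symm) hne
  · exact congrArg₂ (pc f) hu hv
  · exact (congrArg₂ (pc f) hu hv).trans (pc_symm f q p)
  · exact absurd (hu.trans hv.symm) hne

lemma five_colors {S : Set (Fin 9)} (h : S.ncard ≤ 4) {a b c d e : Fin 9}
    (ha : a ∈ S) (hb : b ∈ S) (hc : c ∈ S) (hd : d ∈ S) (he : e ∈ S)
    (h1 : a ≠ b) (h2 : a ≠ c) (h3 : a ≠ d) (h4 : a ≠ e)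
    (h5 : b ≠ c) (h6 : b ≠ d) (h7 : b ≠ e) (h8 : c ≠ d) (h9 : c ≠ e) (h10 : d ≠ e) : False := by
  have hsub : ({a, b, c, d, e} : Set (Fin 9)) ⊆ S := by
    intro x hx
    simp only [Set.mem_insert_iff, Set.mem_singleton_iff] at hx
    rcases hx with rfl | rfl | rfl | rfl | rfl <;> assumption
  have h5c : ({a, b, c, d, e} : Set (Fin 9)).ncard = 5 := by
    rw [Set.ncard_insert_of_notMem (by simp [h1, h2, h3, h4]),
      Set.ncard_insert_of_notMem (by simp [h5, h6, h7]),
      Set.ncard_insert_of_notMem (by simp [h8, h9]),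
      Set.ncard_insert_of_notMem (by simp [h10]), Set.ncard_singleton]
  have hle := Set.ncard_le_ncard hsub (Set.toFinite S)
  omega

end Stmt5Aux


open Stmt5Aux

/-- a (2,4)-weakly Ramsey non-P-point in standard position has the
three-functions property. -/
theorem stmt5 (W : Ultrafilter (ℕ × ℕ)) (hstd : StdNonPpoint W)
    (hwr : WeaklyRamsey W 2 4) :
    ThreeFunctions W := by
  classical
  intro f
  obtain ⟨H, hHW, hcard⟩ := hwr 9 (colr f)
  set CS : Set (Fin 9) :=
    {i : Fin 9 | ∃ s, s ⊆ H ∧ s.Finite ∧ s.ncard = 2 ∧ colr f s = i} with hCSdef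
  -- every single column is a small set
  have hcol : ∀ m : ℕ, {p : ℕ × ℕ | p.1 = m} ∉ W := by
    intro m hm
    exact (hstd.2 _ hm).2 ⟨m, fun p hp => hp⟩
  have hcols_le : ∀ N : ℕ, {p : ℕ × ℕ | p.1 ≤ N} ∉ W := by
    intro N
    induction N with
    | zero =>
      intro hm
      apply hcol 0
      have he : {p : ℕ × ℕ | p.1 ≤ 0} = {p : ℕ × ℕ | p.1 = 0} := by
        ext p; simp only [Set.mem_setOf_eq]; omega
      rwa [he] at hm
    | succ n ih =>
      intro hm
      have he : {p : ℕ × ℕ | p.1 ≤ n + 1}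
          = {p : ℕ × ℕ | p.1 ≤ n} ∪ {p : ℕ × ℕ | p.1 = n + 1} := by
        ext p; simp only [Set.mem_setOf_eq, Set.mem_union]; omega
      rw [he, Ultrafilter.union_mem_iff] at hm
      rcases hm with h | h
      · exact ih h
      · exact hcol _ h
  have hgt : ∀ N : ℕ, {p : ℕ × ℕ | N < p.1} ∈ W := by
    intro N
    have h1 : {p : ℕ × ℕ | N < p.1} = {p : ℕ × ℕ | p.1 ≤ N}ᶜ := by
      ext p; simp only [Set.mem_setOf_eq, Set.mem_compl_iff]; omega
    rw [h1]
    exact Ultrafilter.compl_mem_iff_notMem.2 (hcols_le N)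
  -- every W-set has an infinite column
  have hinfcol : ∀ A : Set (ℕ × ℕ), A ∈ W →
      ∃ m, ¬ {p : ℕ × ℕ | p ∈ A ∧ p.1 = m}.Finite := by
    intro A hA
    have h := (hstd.2 A hA).1
    push_neg at h
    exact h
  -- points below the diagonal form a small set
  have hdiag : {p : ℕ × ℕ | p.1 < p.2} ∈ W := by
    have h1 : {p : ℕ × ℕ | p.1 < p.2} = {p : ℕ × ℕ | p.2 ≤ p.1}ᶜ := by
      ext p; simp only [Set.mem_setOf_eq, Set.mem_compl_iff]; omega
    rw [h1]
    apply Ultrafilter.compl_mem_iff_notMem.2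
    intro hm
    obtain ⟨m, hminf⟩ := hinfcol _ hm
    apply hminf
    apply Set.Finite.subset ((Set.finite_Iic m).prod (Set.finite_Iic m))
    intro p hp
    simp only [Set.mem_setOf_eq] at hp
    have hmem : p.1 ∈ Set.Iic m ∧ p.2 ∈ Set.Iic m := by
      simp only [Set.mem_Iic]; omega
    exact Set.mem_prod.2 hmem
  -- normalization: shrink to a set all of whose nonempty columns are infinite
  have hnorm : ∀ A : Set (ℕ × ℕ), A ∈ W →
      ∃ B, B ∈ W ∧ B ⊆ A ∧ ∀ p ∈ B, {y | (p.1, y) ∈ B}.Infinite := by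
    intro A hA
    set B := {p ∈ A | {y | (p.1, y) ∈ A}.Infinite} with hBdef
    set C := {p ∈ A | ¬ {y | (p.1, y) ∈ A}.Infinite} with hCdef
    have hCnot : C ∉ W := by
      intro hC
      obtain ⟨m, hminf⟩ := hinfcol C hC
      have hsecC : {y | (m, y) ∈ C}.Infinite := by
        intro hfin
        apply hminf
        apply Set.Finite.subset (hfin.image (fun y => (m, y)))
        intro p hp
        refine ⟨p.2, ?_, ?_⟩
        · have h1 : p.1 = m := hp.2
          show (m, p.2) ∈ C
          rw [← h1, Prod.mk.eta]
          exact hp.1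
        · have h1 : p.1 = m := hp.2
          show (m, p.2) = p
          rw [← h1]
      obtain ⟨y, hy⟩ := hsecC.nonempty
      have hyC : (m, y) ∈ C := hy
      apply hyC.2
      exact hsecC.mono (fun y' (hy' : (m, y') ∈ C) => hy'.1)
    have hBW : B ∈ W := by
      have hun : A ⊆ B ∪ C := by
        intro p hp
        by_cases hx : {y | (p.1, y) ∈ A}.Infinite
        · exact Or.inl ⟨hp, hx⟩
        · exact Or.inr ⟨hp, hx⟩
      have hBC : B ∪ C ∈ W := Filter.mem_of_superset hA hun
      rcases Ultrafilter.union_mem_iff.1 hBC with h | h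
      · exact h
      · exact absurd h hCnot
    refine ⟨B, hBW, fun p hp => hp.1, ?_⟩
    intro p hp
    have he : {y | (p.1, y) ∈ B} = {y | (p.1, y) ∈ A} := by
      ext y
      constructor
      · exact fun h => h.1
      · intro hyA
        exact ⟨hyA, hp.2⟩
    rw [he]
    exact hp.2
  obtain ⟨A, hAW, hAsub, hAsec⟩ :=
    hnorm (H ∩ {p : ℕ × ℕ | p.1 < p.2}) (Filter.inter_mem hHW hdiag)
  have hAH : A ⊆ H := fun p hp => (hAsub hp).1
  have hAd : ∀ p ∈ A, p.1 < p.2 := fun p hp => (hAsub hp).2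
  obtain ⟨p₀, hp₀⟩ := Ultrafilter.nonempty_of_mem hAW
  have hsecUnb : ∀ p ∈ A, ∀ N : ℕ, ∃ y, N < y ∧ (p.1, y) ∈ A := by
    intro p hp N
    by_contra hno
    push_neg at hno
    apply hAsec p hp
    apply Set.Finite.subset (Set.finite_Iic N)
    intro y hy
    simp only [Set.mem_Iic]
    by_contra hNy
    exact hno y (by omega) hy
  have hcolGt : ∀ N : ℕ, ∃ q ∈ A, N < q.1 := by
    intro N
    obtain ⟨q, hq⟩ := Ultrafilter.nonempty_of_mem (Filter.inter_mem hAW (hgt N))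
    exact ⟨q, hq.1, hq.2⟩
  -- the color of any pair from A is a realized color
  have hmem : ∀ p q : ℕ × ℕ, p ∈ A → q ∈ A → p ≠ q → pc f p q ∈ CS := by
    intro p q hp hq hpq
    refine ⟨{p, q}, ?_, (Set.finite_singleton q).insert p,
      Set.ncard_pair hpq, colr_pair f hpq⟩
    intro x hx
    simp only [Set.mem_insert_iff, Set.mem_singleton_iff] at hx
    rcases hx with rfl | rfl
    · exact hAH hp
    · exact hAH hq
  -- a same-column pair
  obtain ⟨y₁, hy₁gt, hy₁A⟩ := hsecUnb p₀ hp₀ p₀.2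
  have hpS : p₀ ≠ (p₀.1, y₁) := by
    intro h
    have h2 : p₀.2 = y₁ := congrArg Prod.snd h
    omega
  have hSform : pc f p₀ (p₀.1, y₁) = if f p₀ = f (p₀.1, y₁) then 1 else 2 := by
    rw [pc_of_lt f p₀ (p₀.1, y₁) hy₁gt, pcAux_samecol f p₀ (p₀.1, y₁) rfl]
  have hSex : ∃ i ∈ CS, i = 1 ∨ i = 2 := by
    refine ⟨_, hSform ▸ hmem _ _ hp₀ hy₁A hpS, ?_⟩
    by_cases h : f p₀ = f (p₀.1, y₁) <;> simp [h]
  -- a second column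
  obtain ⟨q₁, hq₁A, hq₁gt⟩ := hcolGt p₀.1
  -- a crossing pair
  obtain ⟨y₂, hy₂gt, hy₂A⟩ := hsecUnb p₀ hp₀ (max q₁.2 p₀.2)
  have hq₁r : q₁ ≠ (p₀.1, y₂) := by
    intro h
    have h2 : q₁.1 = p₀.1 := by rw [h]
    omega
  have hCRform : pc f q₁ (p₀.1, y₂) = if f q₁ = f (p₀.1, y₂) then 3 else 4 := by
    rw [pc_of_lt f q₁ (p₀.1, y₂) (lt_of_le_of_lt (le_max_left _ _) hy₂gt),
      pcAux_cr f q₁ (p₀.1, y₂) hq₁gt]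
  have hCRex : ∃ i ∈ CS, i = 3 ∨ i = 4 := by
    refine ⟨_, hCRform ▸ hmem _ _ hq₁A hy₂A hq₁r, ?_⟩
    by_cases h : f q₁ = f (p₀.1, y₂) <;> simp [h]
  -- an increasing-low pair
  obtain ⟨y₃, hy₃gt, hy₃A⟩ := hsecUnb p₀ hp₀ q₁.1
  obtain ⟨Y₃, hY₃gt, hY₃A⟩ := hsecUnb q₁ hq₁A y₃
  have hILne : ((p₀.1, y₃) : ℕ × ℕ) ≠ (q₁.1, Y₃) := by
    intro h
    injection h with h2 h3
    omega
  have hILform : pc f (p₀.1, y₃) (q₁.1, Y₃)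
      = if f (p₀.1, y₃) = f (q₁.1, Y₃) then 5 else 6 := by
    rw [pc_of_lt f (p₀.1, y₃) (q₁.1, Y₃) hY₃gt,
      pcAux_il f (p₀.1, y₃) (q₁.1, Y₃) hq₁gt hy₃gt]
  have hILex : ∃ i ∈ CS, i = 5 ∨ i = 6 := by
    refine ⟨_, hILform ▸ hmem _ _ hy₃A hY₃A hILne, ?_⟩
    by_cases h : f (p₀.1, y₃) = f (q₁.1, Y₃) <;> simp [h]
  -- an increasing-high pair
  obtain ⟨q₂, hq₂A, hq₂gt⟩ := hcolGt p₀.2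
  have hIHne : p₀ ≠ q₂ := by
    intro h
    have h2 : p₀.1 = q₂.1 := congrArg Prod.fst h
    have h3 := hAd p₀ hp₀
    omega
  have hIHform : pc f p₀ q₂ = if f p₀ = f q₂ then 7 else 8 := by
    have h1 := hAd q₂ hq₂A
    rw [pc_of_lt f p₀ q₂ (by omega), pcAux_ih f p₀ q₂ (hAd p₀ hp₀) hq₂gt]
  have hIHex : ∃ i ∈ CS, i = 7 ∨ i = 8 := by
    refine ⟨_, hIHform ▸ hmem _ _ hp₀ hq₂A hIHne, ?_⟩
    by_cases h : f p₀ = f q₂ <;> simp [h]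
  obtain ⟨iCR, hiCRmem, hiCR⟩ := hCRex
  obtain ⟨iIL, hiILmem, hiIL⟩ := hILex
  obtain ⟨iIH, hiIHmem, hiIH⟩ := hIHex
  by_cases h2mem : (2 : Fin 9) ∈ CS
  · -- some same-column pair has distinct values: f is injective on A
    have h1not : (1 : Fin 9) ∉ CS := by
      intro h1mem
      exact five_colors hcard h1mem h2mem hiCRmem hiILmem hiIHmem
        (by decide)
        (by rcases hiCR with rfl | rfl <;> decide)
        (by rcases hiIL with rfl | rfl <;> decide)
        (by rcases hiIH with rfl | rfl <;> decide)
        (by rcases hiCR with rfl | rfl <;> decide)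
        (by rcases hiIL with rfl | rfl <;> decide)
        (by rcases hiIH with rfl | rfl <;> decide)
        (by rcases hiCR with rfl | rfl <;> rcases hiIL with rfl | rfl <;> decide)
        (by rcases hiCR with rfl | rfl <;> rcases hiIH with rfl | rfl <;> decide)
        (by rcases hiIL with rfl | rfl <;> rcases hiIH with rfl | rfl <;> decide)
    have hsNe : ∀ p q : ℕ × ℕ, p ∈ A → q ∈ A → p ≠ q → p.1 = q.1 → f p ≠ f q := by
      intro p q hp hq hpq hc hfeq
      apply h1not
      have h2ne : p.2 ≠ q.2 := by
        intro h2
        exact hpq (Prod.ext hc h2)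
      rcases Nat.lt_or_ge p.2 q.2 with h | h
      · have hval : pc f p q = 1 := by
          rw [pc_of_lt f p q h, pcAux_samecol f p q hc.symm, if_pos hfeq]
        exact hval ▸ hmem p q hp hq hpq
      · have hlt : q.2 < p.2 := by omega
        have hval : pc f p q = 1 := by
          rw [pc_symm f p q, pc_of_lt f q p hlt, pcAux_samecol f q p hc, if_pos hfeq.symm]
        exact hval ▸ hmem p q hp hq hpq
    -- crossing triangle: 4 ∈ CS
    have h4mem : (4 : Fin 9) ∈ CS := by
      obtain ⟨z₁, hz₁gt, hz₁A⟩ := hsecUnb p₀ hp₀ (max q₁.2 p₀.2)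
      obtain ⟨z₂, hz₂gt, hz₂A⟩ := hsecUnb p₀ hp₀ z₁
      have hrr : f (p₀.1, z₁) ≠ f (p₀.1, z₂) := by
        apply hsNe _ _ hz₁A hz₂A _ rfl
        intro h
        have h2 : z₁ = z₂ := congrArg Prod.snd h
        omega
      have hq2 : q₁.2 < z₁ := lt_of_le_of_lt (le_max_left _ _) hz₁gt
      have key : ∀ y : ℕ, (p₀.1, y) ∈ A → q₁.2 < y → f q₁ ≠ f (p₀.1, y) →
          (4 : Fin 9) ∈ CS := by
        intro y hyA hy hne
        have hform : pc f q₁ (p₀.1, y) = 4 := by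
          rw [pc_of_lt f q₁ (p₀.1, y) hy, pcAux_cr f q₁ (p₀.1, y) hq₁gt, if_neg hne]
        refine hform ▸ hmem _ _ hq₁A hyA ?_
        intro h
        have h2 : q₁.1 = p₀.1 := by rw [h]
        omega
      by_cases h : f q₁ = f (p₀.1, z₁)
      · exact key z₂ hz₂A (by omega) (fun hh => hrr (h.symm.trans hh))
      · exact key z₁ hz₁A hq2 h
    have h3not : (3 : Fin 9) ∉ CS := by
      intro h3mem
      exact five_colors hcard h2mem h3mem h4mem hiILmem hiIHmem
        (by decide) (by decide)
        (by rcases hiIL with rfl | rfl <;> decide)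
        (by rcases hiIH with rfl | rfl <;> decide)
        (by decide)
        (by rcases hiIL with rfl | rfl <;> decide)
        (by rcases hiIH with rfl | rfl <;> decide)
        (by rcases hiIL with rfl | rfl <;> decide)
        (by rcases hiIH with rfl | rfl <;> decide)
        (by rcases hiIL with rfl | rfl <;> rcases hiIH with rfl | rfl <;> decide)
    -- increasing-low triangle: 6 ∈ CS
    have h6mem : (6 : Fin 9) ∈ CS := by
      obtain ⟨z₁, hz₁gt, hz₁A⟩ := hsecUnb p₀ hp₀ q₁.1
      obtain ⟨z₂, hz₂gt, hz₂A⟩ := hsecUnb p₀ hp₀ z₁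
      obtain ⟨Y', hY'gt, hY'A⟩ := hsecUnb q₁ hq₁A z₂
      have hrr : f (p₀.1, z₁) ≠ f (p₀.1, z₂) := by
        apply hsNe _ _ hz₁A hz₂A _ rfl
        intro h
        have h2 : z₁ = z₂ := congrArg Prod.snd h
        omega
      have key : ∀ y : ℕ, (p₀.1, y) ∈ A → q₁.1 < y → y < Y' →
          f (p₀.1, y) ≠ f (q₁.1, Y') → (6 : Fin 9) ∈ CS := by
        intro y hyA h1 h2 hne
        have hform : pc f (p₀.1, y) (q₁.1, Y') = 6 := by
          rw [pc_of_lt f (p₀.1, y) (q₁.1, Y') h2,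
            pcAux_il f (p₀.1, y) (q₁.1, Y') hq₁gt h1, if_neg hne]
        refine hform ▸ hmem _ _ hyA hY'A ?_
        intro h
        injection h with h2' h3'
        omega
      by_cases h : f (p₀.1, z₁) = f (q₁.1, Y')
      · exact key z₂ hz₂A (by omega) (by omega) (fun hh => hrr (h.trans hh.symm))
      · exact key z₁ hz₁A hz₁gt (by omega) h
    have h5not : (5 : Fin 9) ∉ CS := by
      intro h5mem
      exact five_colors hcard h2mem h5mem h6mem hiCRmem hiIHmem
        (by decide) (by decide)
        (by rcases hiCR with rfl | rfl <;> decide)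
        (by rcases hiIH with rfl | rfl <;> decide)
        (by decide)
        (by rcases hiCR with rfl | rfl <;> decide)
        (by rcases hiIH with rfl | rfl <;> decide)
        (by rcases hiCR with rfl | rfl <;> decide)
        (by rcases hiIH with rfl | rfl <;> decide)
        (by rcases hiCR with rfl | rfl <;> rcases hiIH with rfl | rfl <;> decide)
    -- increasing-high triangle: 8 ∈ CS
    have h8mem : (8 : Fin 9) ∈ CS := by
      obtain ⟨q₂', hq₂'A, hq₂'gt⟩ := hcolGt y₁
      have hfs : f p₀ ≠ f (p₀.1, y₁) := hsNe _ _ hp₀ hy₁A hpS rfl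
      have key : ∀ x : ℕ × ℕ, x ∈ A → x.2 < q₂'.1 → f x ≠ f q₂' →
          (8 : Fin 9) ∈ CS := by
        intro x hx hlt hne
        have hx2 : x.2 < q₂'.2 := by
          have h1 := hAd q₂' hq₂'A
          omega
        have hform : pc f x q₂' = 8 := by
          rw [pc_of_lt f x q₂' hx2, pcAux_ih f x q₂' (hAd x hx) hlt, if_neg hne]
        refine hform ▸ hmem _ _ hx hq₂'A ?_
        intro h
        have h2 : x.1 = q₂'.1 := congrArg Prod.fst h
        have h3 := hAd x hx
        omega
      by_cases h : f p₀ = f q₂'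
      · exact key (p₀.1, y₁) hy₁A (show ((p₀.1, y₁) : ℕ × ℕ).2 < q₂'.1 from hq₂'gt)
          (fun hh => hfs (h.trans hh.symm))
      · exact key p₀ hp₀ (by omega) h
    have h7not : (7 : Fin 9) ∉ CS := by
      intro h7mem
      exact five_colors hcard h2mem h7mem h8mem hiCRmem hiILmem
        (by decide) (by decide)
        (by rcases hiCR with rfl | rfl <;> decide)
        (by rcases hiIL with rfl | rfl <;> decide)
        (by decide)
        (by rcases hiCR with rfl | rfl <;> decide)
        (by rcases hiIL with rfl | rfl <;> decide)
        (by rcases hiCR with rfl | rfl <;> decide)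
        (by rcases hiIL with rfl | rfl <;> decide)
        (by rcases hiCR with rfl | rfl <;> rcases hiIL with rfl | rfl <;> decide)
    have h0not : (0 : Fin 9) ∉ CS := by
      intro h0mem
      exact five_colors hcard h0mem h2mem hiCRmem hiILmem hiIHmem
        (by decide)
        (by rcases hiCR with rfl | rfl <;> decide)
        (by rcases hiIL with rfl | rfl <;> decide)
        (by rcases hiIH with rfl | rfl <;> decide)
        (by rcases hiCR with rfl | rfl <;> decide)
        (by rcases hiIL with rfl | rfl <;> decide)
        (by rcases hiIH with rfl | rfl <;> decide)
        (by rcases hiCR with rfl | rfl <;> rcases hiIL with rfl | rfl <;> decide)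
        (by rcases hiCR with rfl | rfl <;> rcases hiIH with rfl | rfl <;> decide)
        (by rcases hiIL with rfl | rfl <;> rcases hiIH with rfl | rfl <;> decide)
    -- conclude: f is injective on A
    refine ⟨A, hAW, Or.inr (Or.inl ?_)⟩
    intro p hp q hq hfeq
    by_contra hpq
    have hin := hmem p q hp hq hpq
    rcases lt_trichotomy p.2 q.2 with h | h | h
    · rw [pc_of_lt f p q h] at hin
      unfold pcAux at hin
      by_cases c1 : q.1 = p.1
      · rw [if_pos c1, if_pos hfeq] at hin; exact h1not hin
      · rw [if_neg c1] at hin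
        by_cases c2 : q.1 < p.1
        · rw [if_pos c2, if_pos hfeq] at hin; exact h3not hin
        · rw [if_neg c2] at hin
          by_cases c3 : q.1 < p.2
          · rw [if_pos c3, if_pos hfeq] at hin; exact h5not hin
          · rw [if_neg c3] at hin
            by_cases c4 : q.1 = p.2
            · rw [if_pos c4] at hin; exact h0not hin
            · rw [if_neg c4, if_pos hfeq] at hin; exact h7not hin
    · rw [pc_of_eq f p q h] at hin; exact h0not hin
    · rw [pc_symm f p q, pc_of_lt f q p h] at hin
      unfold pcAux at hin
      by_cases c1 : p.1 = q.1
      · rw [if_pos c1, if_pos hfeq.symm] at hin; exact h1not hin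
      · rw [if_neg c1] at hin
        by_cases c2 : p.1 < q.1
        · rw [if_pos c2, if_pos hfeq.symm] at hin; exact h3not hin
        · rw [if_neg c2] at hin
          by_cases c3 : p.1 < q.2
          · rw [if_pos c3, if_pos hfeq.symm] at hin; exact h5not hin
          · rw [if_neg c3] at hin
            by_cases c4 : p.1 = q.2
            · rw [if_pos c4] at hin; exact h0not hin
            · rw [if_neg c4, if_pos hfeq.symm] at hin; exact h7not hin
  · -- all same-column pairs of A are f-equal
    have hsEq : ∀ p q : ℕ × ℕ, p ∈ A → q ∈ A → p.1 = q.1 → f p = f q := by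
      intro p q hp hq hc
      by_cases hpq : p = q
      · rw [hpq]
      by_contra hne
      apply h2mem
      rcases lt_trichotomy p.2 q.2 with h | h | h
      · have hval : pc f p q = 2 := by
          rw [pc_of_lt f p q h, pcAux_samecol f p q hc.symm, if_neg hne]
        exact hval ▸ hmem p q hp hq hpq
      · exact absurd (Prod.ext hc h) hpq
      · have hval : pc f p q = 2 := by
          rw [pc_symm f p q, pc_of_lt f q p h, pcAux_samecol f q p hc,
            if_neg (fun hh => hne hh.symm)]
        exact hval ▸ hmem p q hp hq hpq
    have h1mem : (1 : Fin 9) ∈ CS := by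
      obtain ⟨iS, hiSmem, hiS⟩ := hSex
      rcases hiS with rfl | rfl
      · exact hiSmem
      · exact absurd hiSmem h2mem
    by_cases h4mem : (4 : Fin 9) ∈ CS
    · -- f factors through π₁ with injective column values
      have h3not : (3 : Fin 9) ∉ CS := by
        intro h3mem
        exact five_colors hcard h1mem h3mem h4mem hiILmem hiIHmem
          (by decide) (by decide)
          (by rcases hiIL with rfl | rfl <;> decide)
          (by rcases hiIH with rfl | rfl <;> decide)
          (by decide)
          (by rcases hiIL with rfl | rfl <;> decide)
          (by rcases hiIH with rfl | rfl <;> decide)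
          (by rcases hiIL with rfl | rfl <;> decide)
          (by rcases hiIH with rfl | rfl <;> decide)
          (by rcases hiIL with rfl | rfl <;> rcases hiIH with rfl | rfl <;> decide)
      have hdNe : ∀ p q : ℕ × ℕ, p ∈ A → q ∈ A → p.1 < q.1 → f p ≠ f q := by
        intro p q hp hq hlt
        obtain ⟨y, hygt, hyA⟩ := hsecUnb p hp (max q.2 p.2)
        have h1 : f p = f (p.1, y) := hsEq p (p.1, y) hp hyA rfl
        have h2 : f q ≠ f (p.1, y) := by
          intro hqr
          apply h3not
          have hform : pc f q (p.1, y) = 3 := by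
            rw [pc_of_lt f q (p.1, y) (lt_of_le_of_lt (le_max_left _ _) hygt),
              pcAux_cr f q (p.1, y) hlt, if_pos hqr]
          refine hform ▸ hmem _ _ hq hyA ?_
          intro h
          have h2' : q.1 = p.1 := by rw [h]
          omega
        intro hpq
        exact h2 (hpq.symm.trans h1)
      have hdNe' : ∀ p q : ℕ × ℕ, p ∈ A → q ∈ A → p.1 ≠ q.1 → f p ≠ f q := by
        intro p q hp hq hne
        rcases Nat.lt_or_ge p.1 q.1 with h | h
        · exact hdNe p q hp hq h
        · exact fun hh => (hdNe q p hq hp (by omega)) hh.symm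
      -- the column set of A is infinite
      set SP : Set ℕ := {m : ℕ | ∃ y, (m, y) ∈ A} with hSPdef
      have hSinf : SP.Infinite := by
        by_contra hfin
        rw [Set.not_infinite] at hfin
        obtain ⟨N, hN⟩ := hfin.bddAbove
        obtain ⟨q, hqA, hqgt⟩ := hcolGt N
        have hle : q.1 ≤ N := hN ⟨q.2, by rw [Prod.mk.eta]; exact hqA⟩
        omega
      let e : ℕ ↪ SP := Set.Infinite.natEmbedding _ hSinf
      set T : Set ℕ := Set.range (fun n => (e (2 * n) : ℕ)) with hTdef
      set M1 : Set ℕ := Set.range (fun n => (e (2 * n + 1) : ℕ)) with hM1def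
      have hTM1 : ∀ x, x ∈ T → x ∈ M1 → False := by
        intro x hxT hxM
        obtain ⟨n, hn⟩ := hxT
        obtain ⟨n', hn'⟩ := hxM
        have h1 : e (2 * n) = e (2 * n' + 1) := Subtype.ext (hn.trans hn'.symm)
        have h2 := e.injective h1
        omega
      have hM1inf : M1.Infinite := by
        apply Set.infinite_range_of_injective
        intro a b hab
        have h1 : e (2 * a + 1) = e (2 * b + 1) := Subtype.ext hab
        have h2 := e.injective h1
        omega
      have hTinf : T.Infinite := by
        apply Set.infinite_range_of_injective
        intro a b hab
        have h1 : e (2 * a) = e (2 * b) := Subtype.ext hab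
        have h2 := e.injective h1
        omega
      have hM1S : M1 ⊆ SP := by
        rintro x ⟨n, rfl⟩
        exact (e (2 * n + 1)).2
      have hTS : T ⊆ SP := by
        rintro x ⟨n, rfl⟩
        exact (e (2 * n)).2
      have main : ∀ (A₂ : Set (ℕ × ℕ)) (M : Set ℕ), A₂ ∈ W → A₂ ⊆ A → M ⊆ SP →
          M.Infinite → (∀ p ∈ A₂, p.1 ∉ M) →
          ∃ B ∈ W, (∃ c, ∀ p ∈ B, f p = c) ∨ Set.InjOn f B ∨
            (∃ g : ℕ → ℕ, Function.Injective g ∧ ∀ p ∈ B, f p = g (p : ℕ × ℕ).1) := by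
        intro A₂ M hA₂W hA₂A hMS hMinf hMdisj
        have hpickS : ∀ m ∈ SP, ∃ y, (m, y) ∈ A := fun m hm => hm
        choose yS hyS using hpickS
        set S₂ : Set ℕ := {m : ℕ | ∃ y, (m, y) ∈ A₂} with hS₂def
        have hpick₂ : ∀ m ∈ S₂, ∃ y, (m, y) ∈ A₂ := fun m hm => hm
        choose y₂ hy₂ using hpick₂
        let eM : ℕ ↪ M := Set.Infinite.natEmbedding _ hMinf
        set g : ℕ → ℕ := fun m => if hm : m ∈ S₂ then f (m, y₂ m hm)
            else f ((eM m : ℕ), yS (eM m : ℕ) (hMS (eM m).2)) with hgdef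
        have hgpos : ∀ m (hm : m ∈ S₂), g m = f (m, y₂ m hm) := by
          intro m hm
          show (if hm : m ∈ S₂ then f (m, y₂ m hm)
            else f ((eM m : ℕ), yS (eM m : ℕ) (hMS (eM m).2))) = f (m, y₂ m hm)
          rw [dif_pos hm]
        have hgneg : ∀ m, m ∉ S₂ → g m = f ((eM m : ℕ), yS (eM m : ℕ) (hMS (eM m).2)) := by
          intro m hm
          show (if hm : m ∈ S₂ then f (m, y₂ m hm)
            else f ((eM m : ℕ), yS (eM m : ℕ) (hMS (eM m).2)))
            = f ((eM m : ℕ), yS (eM m : ℕ) (hMS (eM m).2))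
          rw [dif_neg hm]
        refine ⟨A₂, hA₂W, Or.inr (Or.inr ⟨g, ?_, ?_⟩)⟩
        · intro m m' hgg
          by_contra hne
          rcases em (m ∈ S₂) with hm | hm <;> rcases em (m' ∈ S₂) with hm' | hm'
          · rw [hgpos m hm, hgpos m' hm'] at hgg
            exact hdNe' _ _ (hA₂A (hy₂ m hm)) (hA₂A (hy₂ m' hm')) hne hgg
          · rw [hgpos m hm, hgneg m' hm'] at hgg
            refine hdNe' _ _ (hA₂A (hy₂ m hm)) (hyS _ (hMS (eM m').2)) ?_ hgg
            have h1 : m ∉ M := hMdisj (m, y₂ m hm) (hy₂ m hm)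
            intro hc
            have hc' : m = (eM m' : ℕ) := hc
            exact h1 (hc' ▸ (eM m').2)
          · rw [hgneg m hm, hgpos m' hm'] at hgg
            refine hdNe' _ _ (hyS _ (hMS (eM m).2)) (hA₂A (hy₂ m' hm')) ?_ hgg
            have h1 : m' ∉ M := hMdisj (m', y₂ m' hm') (hy₂ m' hm')
            intro hc
            have hc' : (eM m : ℕ) = m' := hc
            exact h1 (hc' ▸ (eM m).2)
          · rw [hgneg m hm, hgneg m' hm'] at hgg
            refine absurd hgg (hdNe' _ _ (hyS _ (hMS (eM m).2)) (hyS _ (hMS (eM m').2)) ?_)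
            intro hc
            have hc' : (eM m : ℕ) = (eM m' : ℕ) := hc
            exact hne (eM.injective (Subtype.ext hc'))
        · intro p hp
          have hm : p.1 ∈ S₂ := ⟨p.2, by rw [Prod.mk.eta]; exact hp⟩
          rw [hgpos p.1 hm]
          exact hsEq p (p.1, y₂ p.1 hm) (hA₂A hp) (hA₂A (hy₂ p.1 hm)) rfl
      have hsplit : A ⊆ (A ∩ {p : ℕ × ℕ | p.1 ∈ T}) ∪ (A ∩ {p : ℕ × ℕ | p.1 ∉ T}) := by
        intro p hp
        by_cases h : p.1 ∈ T
        · exact Or.inl ⟨hp, h⟩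
        · exact Or.inr ⟨hp, h⟩
      rcases Ultrafilter.union_mem_iff.1 (Filter.mem_of_superset hAW hsplit) with hA2 | hA2
      · exact main _ M1 hA2 (fun p hp => hp.1) hM1S hM1inf
          (fun p hp hpM => hTM1 p.1 hp.2 hpM)
      · exact main _ T hA2 (fun p hp => hp.1) hTS hTinf
          (fun p hp hpM => hp.2 hpM)
    · -- f is constant on A
      have hdEq : ∀ p q : ℕ × ℕ, p ∈ A → q ∈ A → p.1 < q.1 → f p = f q := by
        intro p q hp hq hlt
        obtain ⟨y, hygt, hyA⟩ := hsecUnb p hp (max q.2 p.2)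
        have h1 : f p = f (p.1, y) := hsEq p (p.1, y) hp hyA rfl
        have h2 : f q = f (p.1, y) := by
          by_contra hqr
          apply h4mem
          have hform : pc f q (p.1, y) = 4 := by
            rw [pc_of_lt f q (p.1, y) (lt_of_le_of_lt (le_max_left _ _) hygt),
              pcAux_cr f q (p.1, y) hlt, if_neg hqr]
          refine hform ▸ hmem _ _ hq hyA ?_
          intro h
          have h2' : q.1 = p.1 := by rw [h]
          omega
        rw [h1, ← h2]
      refine ⟨A, hAW, Or.inl ⟨f p₀, ?_⟩⟩
      intro p hp
      rcases lt_trichotomy p.1 p₀.1 with h | h | h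
      · exact hdEq p p₀ hp hp₀ h
      · exact hsEq p p₀ hp hp₀ h
      · exact (hdEq p₀ p hp₀ hp h).symm
end

section
/- If W is a (2,4)-weakly Ramsey non-P-point in standard position on ω×ω, then the image ultrafilter π₁(W) = {A ⊆ ω : π₁⁻¹(A) ∈ W} is a selective ultrafilter on ω. -/
open Filter Set

open Classical in
/-- A coloring of (unordered) pairs in `ω × ω` used to prove selectivity. -/
noncomputable def pcol (f : ℕ → ℕ) (s : Set (ℕ × ℕ)) : Fin 5 :=
  if ∃ u ∈ s, ∃ v ∈ s, u ≠ v ∧ u.1 = v.1 then 0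
  else if ∃ u ∈ s, ∃ v ∈ s, u.1 < v.1 ∧ f u.1 = f v.1 then 1
  else if ∃ u ∈ s, ∃ v ∈ s, u.1 < v.1 ∧ u.2 < v.2 ∧ u.2 < v.1 then 2
  else if ∃ u ∈ s, ∃ v ∈ s, u.1 < v.1 ∧ u.2 < v.2 ∧ v.1 ≤ u.2 then 3
  else 4

lemma pair_ex_iff (p q : ℕ × ℕ) (h : p.1 < q.1) (Y : ℕ × ℕ → ℕ × ℕ → Prop) :
    (∃ u ∈ ({p, q} : Set (ℕ × ℕ)), ∃ v ∈ ({p, q} : Set (ℕ × ℕ)), u.1 < v.1 ∧ Y u v) ↔ Y p q := by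
  constructor
  · rintro ⟨u, hu, v, hv, huv, hY⟩
    simp only [Set.mem_insert_iff, Set.mem_singleton_iff] at hu hv
    rcases hu with rfl | rfl <;> rcases hv with rfl | rfl
    · exact absurd huv (lt_irrefl _)
    · exact hY
    · exact absurd (huv.trans h) (lt_irrefl _)
    · exact absurd huv (lt_irrefl _)
  · intro hY
    exact ⟨p, Set.mem_insert _ _, q, Set.mem_insert_of_mem _ rfl, h, hY⟩

lemma pair_nocol {p q : ℕ × ℕ} (h : p.1 ≠ q.1) :
    ¬ ∃ u ∈ ({p, q} : Set (ℕ × ℕ)), ∃ v ∈ ({p, q} : Set (ℕ × ℕ)), u ≠ v ∧ u.1 = v.1 := by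
  rintro ⟨u, hu, v, hv, hne, he⟩
  simp only [Set.mem_insert_iff, Set.mem_singleton_iff] at hu hv
  rcases hu with rfl | rfl <;> rcases hv with rfl | rfl
  · exact hne rfl
  · exact h he
  · exact h he.symm
  · exact hne rfl

lemma pcol_pair0 (f : ℕ → ℕ) {p q : ℕ × ℕ} (hne : p ≠ q) (h : p.1 = q.1) :
    pcol f {p, q} = 0 := by
  unfold pcol
  rw [if_pos ⟨p, Set.mem_insert _ _, q, Set.mem_insert_of_mem _ rfl, hne, h⟩]

lemma pcol_pair1 (f : ℕ → ℕ) {p q : ℕ × ℕ} (h : p.1 < q.1) (hf : f p.1 = f q.1) :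
    pcol f {p, q} = 1 := by
  unfold pcol
  rw [if_neg (pair_nocol h.ne), if_pos ((pair_ex_iff p q h (fun u v => f u.1 = f v.1)).2 hf)]

lemma pcol_pair2 (f : ℕ → ℕ) {p q : ℕ × ℕ} (h : p.1 < q.1) (hf : f p.1 ≠ f q.1)
    (h2 : p.2 < q.2) (h3 : p.2 < q.1) : pcol f {p, q} = 2 := by
  unfold pcol
  rw [if_neg (pair_nocol h.ne),
    if_neg ((pair_ex_iff p q h (fun u v => f u.1 = f v.1)).not.2 hf),
    if_pos ((pair_ex_iff p q h (fun u v => u.2 < v.2 ∧ u.2 < v.1)).2 ⟨h2, h3⟩)]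

lemma pcol_pair3 (f : ℕ → ℕ) {p q : ℕ × ℕ} (h : p.1 < q.1) (hf : f p.1 ≠ f q.1)
    (h2 : p.2 < q.2) (h3 : q.1 ≤ p.2) : pcol f {p, q} = 3 := by
  unfold pcol
  rw [if_neg (pair_nocol h.ne),
    if_neg ((pair_ex_iff p q h (fun u v => f u.1 = f v.1)).not.2 hf),
    if_neg ((pair_ex_iff p q h (fun u v => u.2 < v.2 ∧ u.2 < v.1)).not.2
      (by rintro ⟨-, hc⟩; omega)),
    if_pos ((pair_ex_iff p q h (fun u v => u.2 < v.2 ∧ v.1 ≤ u.2)).2 ⟨h2, h3⟩)]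

lemma pcol_pair4 (f : ℕ → ℕ) {p q : ℕ × ℕ} (h : p.1 < q.1) (hf : f p.1 ≠ f q.1)
    (h2 : q.2 < p.2) : pcol f {p, q} = 4 := by
  unfold pcol
  rw [if_neg (pair_nocol h.ne),
    if_neg ((pair_ex_iff p q h (fun u v => f u.1 = f v.1)).not.2 hf),
    if_neg ((pair_ex_iff p q h (fun u v => u.2 < v.2 ∧ u.2 < v.1)).not.2
      (by rintro ⟨hc, -⟩; omega)),
    if_neg ((pair_ex_iff p q h (fun u v => u.2 < v.2 ∧ v.1 ≤ u.2)).not.2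
      (by rintro ⟨hc, -⟩; omega))]


/-- if W is a (2,4)-weakly Ramsey non-P-point in standard position, then
the image ultrafilter π₁(W) is selective. -/
theorem stmt6 (W : Ultrafilter (ℕ × ℕ)) (hstd : StdNonPpoint W)
    (hwr : WeaklyRamsey W 2 4) :
    Selective (W.map Prod.fst) := by
  -- the column sets are not in W
  have hnocol : ∀ a : ℕ, {p : ℕ × ℕ | p.1 = a} ∉ W := by
    intro a ha
    exact (hstd.2 _ ha).2 ⟨a, fun p hp => hp⟩
  have hle1 : ∀ m : ℕ, {p : ℕ × ℕ | p.1 ≤ m} ∉ W := by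
    intro m
    induction m with
    | zero =>
        have : {p : ℕ × ℕ | p.1 ≤ 0} = {p : ℕ × ℕ | p.1 = 0} := by
          ext p; simp [Nat.le_zero]
        rw [this]; exact hnocol 0
    | succ n ih =>
        have : {p : ℕ × ℕ | p.1 ≤ n + 1} = {p : ℕ × ℕ | p.1 ≤ n} ∪ {p : ℕ × ℕ | p.1 = n + 1} := by
          ext p; simp only [Set.mem_setOf_eq, Set.mem_union]; omega
        rw [this, Ultrafilter.union_mem_iff]
        rintro (h | h)
        · exact ih h
        · exact hnocol (n + 1) h
  have hfst : ∀ m : ℕ, {p : ℕ × ℕ | m < p.1} ∈ W := by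
    intro m
    have : {p : ℕ × ℕ | m < p.1} = {p : ℕ × ℕ | p.1 ≤ m}ᶜ := by
      ext p; simp only [Set.mem_setOf_eq, Set.mem_compl_iff, not_le]
    rw [this, Ultrafilter.compl_mem_iff_notMem]
    exact hle1 m
  have hsnd : ∀ m : ℕ, {p : ℕ × ℕ | m < p.2} ∈ W := by
    intro m
    have hnot : {p : ℕ × ℕ | p.2 ≤ m} ∉ W := by
      intro hmem
      apply (hstd.2 _ hmem).1
      intro k
      apply Set.Finite.subset (Set.Finite.prod (Set.finite_singleton k) (Set.finite_Iic m))
      rintro ⟨x, y⟩ ⟨hy, hx⟩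
      exact ⟨hx, hy⟩
    have : {p : ℕ × ℕ | m < p.2} = {p : ℕ × ℕ | p.2 ≤ m}ᶜ := by
      ext p; simp only [Set.mem_setOf_eq, Set.mem_compl_iff, not_le]
    rw [this, Ultrafilter.compl_mem_iff_notMem]
    exact hnot
  have hinf : ∀ H ∈ W, ∃ a, {b | (a, b) ∈ H}.Infinite := by
    intro H hH
    have := (hstd.2 _ hH).1
    push_neg at this
    obtain ⟨a, ha⟩ := this
    refine ⟨a, fun hfin => ha ?_⟩
    apply Set.Finite.subset (hfin.image (fun b => (a, b)))
    rintro ⟨x, y⟩ ⟨hp, hx⟩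
    simp only at hx
    subst hx
    exact ⟨y, hp, rfl⟩
  constructor
  · -- nonprincipal
    rw [Filter.le_cofinite_iff_compl_singleton_mem]
    intro x
    rw [Ultrafilter.mem_coe, Ultrafilter.mem_map]
    have : (Prod.fst ⁻¹' ({x}ᶜ) : Set (ℕ × ℕ)) = {p : ℕ × ℕ | p.1 = x}ᶜ := by
      ext p; simp
    rw [this, Ultrafilter.compl_mem_iff_notMem]
    exact hnocol x
  · intro f
    by_cases hconst : ∃ c, {x | f x = c} ∈ W.map Prod.fst
    · obtain ⟨c, hc⟩ := hconst
      exact ⟨_, hc, Or.inr ⟨c, fun x hx => hx⟩⟩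
    push_neg at hconst
    have hfib : ∀ c, {p : ℕ × ℕ | f p.1 = c} ∉ W := by
      intro c h
      exact hconst c (by rwa [Ultrafilter.mem_map])
    have hfle : ∀ m : ℕ, {p : ℕ × ℕ | f p.1 ≤ m} ∉ W := by
      intro m
      induction m with
      | zero =>
          have : {p : ℕ × ℕ | f p.1 ≤ 0} = {p : ℕ × ℕ | f p.1 = 0} := by
            ext p; simp [Nat.le_zero]
          rw [this]; exact hfib 0
      | succ n ih =>
          have : {p : ℕ × ℕ | f p.1 ≤ n + 1} =
              {p : ℕ × ℕ | f p.1 ≤ n} ∪ {p : ℕ × ℕ | f p.1 = n + 1} := by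
            ext p; simp only [Set.mem_setOf_eq, Set.mem_union]; omega
          rw [this, Ultrafilter.union_mem_iff]
          rintro (h | h)
          · exact ih h
          · exact hfib (n + 1) h
    have hfval : ∀ m : ℕ, {p : ℕ × ℕ | m < f p.1} ∈ W := by
      intro m
      have : {p : ℕ × ℕ | m < f p.1} = {p : ℕ × ℕ | f p.1 ≤ m}ᶜ := by
        ext p; simp only [Set.mem_setOf_eq, Set.mem_compl_iff, not_le]
      rw [this, Ultrafilter.compl_mem_iff_notMem]
      exact hfle m
    obtain ⟨H, hH, hcard⟩ := hwr 5 (pcol f)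
    set S := {i : Fin 5 | ∃ s : Set (ℕ × ℕ), s ⊆ H ∧ s.Finite ∧ s.ncard = 2 ∧ pcol f s = i}
      with hS
    obtain ⟨a₁, hB₁⟩ := hinf H hH
    -- a helper to make membership in S
    have hmk : ∀ (i : Fin 5) (p q : ℕ × ℕ), p ∈ H → q ∈ H → p ≠ q → pcol f {p, q} = i →
        i ∈ S := by
      intro i p q hp hq hne hc
      exact ⟨{p, q}, by rw [Set.insert_subset_iff]; exact ⟨hp, by simpa using hq⟩,
        (Set.finite_singleton q).insert p, Set.ncard_pair hne, hc⟩
    have h0 : (0 : Fin 5) ∈ S := by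
      obtain ⟨b, hb⟩ := hB₁.nonempty
      obtain ⟨b', hb', hbb'⟩ := hB₁.exists_gt b
      exact hmk 0 (a₁, b) (a₁, b') hb hb'
        (fun hc => absurd (congrArg Prod.snd hc) hbb'.ne) (pcol_pair0 f
          (fun hc => absurd (congrArg Prod.snd hc) hbb'.ne) rfl)
    have h2 : (2 : Fin 5) ∈ S := by
      obtain ⟨b₀, hb₀⟩ := hB₁.nonempty
      have hT : H ∩ ({p : ℕ × ℕ | a₁ < p.1} ∩ ({p : ℕ × ℕ | b₀ < p.1} ∩
          ({p : ℕ × ℕ | b₀ < p.2} ∩ {p : ℕ × ℕ | f a₁ < f p.1}))) ∈ W :=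
        Filter.inter_mem hH (Filter.inter_mem (hfst a₁) (Filter.inter_mem (hfst b₀)
          (Filter.inter_mem (hsnd b₀) (hfval (f a₁)))))
      obtain ⟨q, hqH, hq1, hq1', hq2, hqf⟩ := Ultrafilter.nonempty_of_mem hT
      replace hq1 : a₁ < q.1 := hq1
      replace hq1' : b₀ < q.1 := hq1'
      replace hq2 : b₀ < q.2 := hq2
      replace hqf : f a₁ < f q.1 := hqf
      refine hmk 2 (a₁, b₀) q hb₀ hqH ?_ (pcol_pair2 f hq1 hqf.ne hq2 hq1')
      intro hc
      exact absurd (congrArg Prod.fst hc) hq1.ne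
    have h3 : (3 : Fin 5) ∈ S := by
      have hT : H ∩ ({p : ℕ × ℕ | a₁ < p.1} ∩ {p : ℕ × ℕ | f p.1 = f a₁}ᶜ) ∈ W :=
        Filter.inter_mem hH (Filter.inter_mem (hfst a₁)
          ((Ultrafilter.compl_mem_iff_notMem).2 (hfib (f a₁))))
      obtain ⟨a₂, hB₂⟩ := hinf _ hT
      obtain ⟨y, hy⟩ := hB₂.nonempty
      obtain ⟨hyH, hy1, hyf⟩ := hy
      have ha12 : a₁ < a₂ := hy1
      have hfa : f a₂ ≠ f a₁ := hyf
      obtain ⟨b₀, hb₀, hb₀gt⟩ := hB₁.exists_gt a₂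
      obtain ⟨b', hb', hb'gt⟩ := hB₂.exists_gt b₀
      have hne : ((a₁, b₀) : ℕ × ℕ) ≠ (a₂, b') :=
        fun hc => absurd (congrArg Prod.fst hc) ha12.ne
      exact hmk 3 (a₁, b₀) (a₂, b') hb₀ hb'.1 hne
        (pcol_pair3 f ha12 (fun h => hfa h.symm) hb'gt hb₀gt.le)
    have h4 : (4 : Fin 5) ∈ S := by
      have hT : H ∩ ({p : ℕ × ℕ | a₁ < p.1} ∩ {p : ℕ × ℕ | f a₁ < f p.1}) ∈ W :=
        Filter.inter_mem hH (Filter.inter_mem (hfst a₁) (hfval (f a₁)))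
      obtain ⟨q, hqH, hq1, hqf⟩ := Ultrafilter.nonempty_of_mem hT
      replace hq1 : a₁ < q.1 := hq1
      replace hqf : f a₁ < f q.1 := hqf
      obtain ⟨b₀, hb₀, hb₀gt⟩ := hB₁.exists_gt q.2
      refine hmk 4 (a₁, b₀) q hb₀ hqH ?_
        (pcol_pair4 f hq1 hqf.ne hb₀gt)
      intro hc
      exact absurd (congrArg Prod.fst hc) hq1.ne
    have h1 : (1 : Fin 5) ∉ S := by
      intro h1
      have huniv : S = Set.univ := by
        apply Set.eq_univ_of_forall
        intro i
        have : i = 0 ∨ i = 1 ∨ i = 2 ∨ i = 3 ∨ i = 4 := by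
          fin_cases i <;> simp
        rcases this with rfl | rfl | rfl | rfl | rfl <;> assumption
      rw [huniv, Set.ncard_univ] at hcard
      simp [Nat.card_eq_fintype_card] at hcard
    have key : ∀ p ∈ H, ∀ q ∈ H, p.1 < q.1 → f p.1 ≠ f q.1 := by
      intro p hp q hq hlt heq
      apply h1
      refine hmk 1 p q hp hq ?_ (pcol_pair1 f hlt heq)
      intro hc; rw [hc] at hlt; exact lt_irrefl _ hlt
    refine ⟨Prod.fst '' H, ?_, Or.inl ?_⟩
    · rw [Ultrafilter.mem_map]
      exact Filter.mem_of_superset hH (Set.subset_preimage_image _ _)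
    · rintro a ⟨p, hp, rfl⟩ a' ⟨q, hq, rfl⟩ heq
      by_contra hne
      rcases Nat.lt_or_ge p.1 q.1 with h | h
      · exact key p hp q hq h heq
      · rcases Nat.lt_or_ge q.1 p.1 with h' | h'
        · exact key q hq p hp h' heq.symm
        · exact hne (le_antisymm h' h)
end

section
/- For every ω-type τ, the set 𝔓_τ is dense in the poset 𝔓 ordered by inclusion: for every A ∈ 𝔓 there is B ⊆ A with B ∈ 𝔓_τ. -/
open Filter Set

open Classical in
noncomputable def pickGe (S : Set ℕ) (bound : ℕ) : ℕ :=
  if h : ∃ m, m ∈ S ∧ bound ≤ m then h.choose else bound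

lemma pickGe_spec {S : Set ℕ} (bound : ℕ) (hS : S.Infinite) :
    pickGe S bound ∈ S ∧ bound ≤ pickGe S bound := by
  have h : ∃ m, m ∈ S ∧ bound ≤ m := by
    obtain ⟨m, hm, hlt⟩ := hS.exists_gt bound
    exact ⟨m, hm, hlt.le⟩
  rw [pickGe, dif_pos h]
  exact h.choose_spec

open Classical in
noncomputable def rho (A : Set (ℕ × ℕ)) (r : OSym → ℕ) : ℕ → ℕ
  | c =>
    if hy : ∃ i, r (Sum.inr i) = c then
      if hx : r (Sum.inl (Classical.choose hy)) < c then
        pickGe (sec A (rho A r (r (Sum.inl (Classical.choose hy)))))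
          (if h0 : c = 0 then 0 else rho A r (c - 1) + 1)
      else 0
    else
      pickGe {n | (sec A n).Infinite} (if h0 : c = 0 then 0 else rho A r (c - 1) + 1)
  termination_by c => c
  decreasing_by all_goals omega

/-- for every ω-type τ, the set 𝔓_τ is dense in the poset 𝔓 ordered by
inclusion. -/
theorem stmt15 (τ : OSym → OSym → Prop) (hτ : IsOmegaType τ) :
    ∀ A : Set (ℕ × ℕ), memP A → ∃ B : Set (ℕ × ℕ), B ⊆ A ∧ B ∈ Ptau τ := by
  intro A hA
  obtain ⟨r, -, hr⟩ := hτ.rank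
  have hxny : ∀ i j, r (Sum.inl i) ≠ r (Sum.inr j) := by
    intro i j h
    exact hτ.x_not_equiv_y i j ⟨(hr _ _).2 h.le, (hr _ _).2 h.ge⟩
  have hY : StrictMono (fun i => r (Sum.inr i)) := by
    intro i j hij
    have h := hτ.y_lt i j hij
    exact lt_of_le_of_ne ((hr _ _).1 h.1) (fun he => h.2 ((hr _ _).2 he.ge))
  have hxy : ∀ i, r (Sum.inl i) < r (Sum.inr i) := fun i =>
    lt_of_le_of_ne ((hr _ _).1 (hτ.x_le_y i)) (hxny i i)
  have key : ∀ c : ℕ,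
      (c ≠ 0 → rho A r (c-1) < rho A r c) ∧
      ((¬ ∃ i, r (Sum.inr i) = c) → (sec A (rho A r c)).Infinite) ∧
      (∀ i, r (Sum.inr i) = c → (rho A r (r (Sum.inl i)), rho A r c) ∈ A) := by
    intro c
    induction c using Nat.strong_induction_on with
    | _ c ih =>
      by_cases hy : ∃ i, r (Sum.inr i) = c
      · have hi0 := Classical.choose_spec hy
        have hx : r (Sum.inl (Classical.choose hy)) < c := by
          have h := hxy (Classical.choose hy); rw [hi0] at h; exact h
        have hsec : (sec A (rho A r (r (Sum.inl (Classical.choose hy))))).Infinite := by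
          apply (ih _ hx).2.1
          rintro ⟨j, hj⟩
          exact hxny (Classical.choose hy) j hj.symm
        have heq : rho A r c = pickGe (sec A (rho A r (r (Sum.inl (Classical.choose hy)))))
            (if h0 : c = 0 then 0 else rho A r (c-1) + 1) := by
          rw [rho, dif_pos hy, dif_pos hx]
        have hp := pickGe_spec (S := sec A (rho A r (r (Sum.inl (Classical.choose hy)))))
            (if h0 : c = 0 then 0 else rho A r (c-1) + 1) hsec
        refine ⟨?_, fun h => absurd hy h, ?_⟩
        · intro h0
          rw [heq]
          have h2 := hp.2
          rw [dif_neg h0] at h2 ⊢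
          omega
        · intro i hic
          have hii : i = Classical.choose hy := hY.injective (hic.trans hi0.symm)
          rw [hii, heq]
          exact hp.1
      · have heq : rho A r c = pickGe {n | (sec A n).Infinite}
            (if h0 : c = 0 then 0 else rho A r (c-1) + 1) := by
          rw [rho, dif_neg hy]
        have hp := pickGe_spec (S := {n | (sec A n).Infinite})
            (if h0 : c = 0 then 0 else rho A r (c-1) + 1) hA.1
        refine ⟨?_, fun _ => by rw [heq]; exact hp.1, fun i hic => absurd ⟨i, hic⟩ hy⟩
        intro h0
        rw [heq]
        have h2 := hp.2
        rw [dif_neg h0] at h2 ⊢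
        omega
  have hmono : StrictMono (rho A r) := strictMono_nat_of_lt_succ (fun n => by
    have h := (key (n+1)).1 (by omega)
    simpa using h)
  set a : ℕ → ℕ := fun i => rho A r (r (Sum.inl i)) with ha
  set b : ℕ → ℕ := fun i => rho A r (r (Sum.inr i)) with hb
  have hbmono : StrictMono b := fun i j hij => hmono (hY hij)
  set B : Set (ℕ × ℕ) := Set.range (fun i => (a i, b i)) with hB
  have hmemB : ∀ n y, (n, y) ∈ B ↔ ∃ i, a i = n ∧ b i = y := by
    intro n y
    simp [hB, Prod.ext_iff, eq_comm]
  have hsecInf : ∀ i, (sec B (a i)).Infinite := by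
    intro i
    have hcls : {j | r (Sum.inl j) = r (Sum.inl i)}.Infinite :=
      (hτ.x_class_infinite i).mono (fun j hj =>
        le_antisymm ((hr _ _).1 hj.2) ((hr _ _).1 hj.1))
    have hsub : b '' {j | r (Sum.inl j) = r (Sum.inl i)} ⊆ sec B (a i) := by
      rintro y ⟨j, hj, rfl⟩
      show (a i, b j) ∈ B
      refine ⟨j, ?_⟩
      simp only [ha]
      rw [hj]
    exact ((hcls.image (hbmono.injective.injOn)).mono hsub)
  have hrangeInf : (Set.range (fun i => r (Sum.inl i))).Infinite := by
    by_contra hfin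
    rw [Set.not_infinite] at hfin
    classical
    let rep : ℕ → ℕ := fun v => if h : ∃ i, r (Sum.inl i) = v then h.choose else 0
    obtain ⟨i, hi⟩ := hτ.x_classes_infinite (hfin.toFinset.image rep)
    have hmem : rep (r (Sum.inl i)) ∈ hfin.toFinset.image rep :=
      Finset.mem_image_of_mem rep (hfin.mem_toFinset.2 ⟨i, rfl⟩)
    have hex : ∃ j, r (Sum.inl j) = r (Sum.inl i) := ⟨i, rfl⟩
    have hgi : r (Sum.inl (rep (r (Sum.inl i)))) = r (Sum.inl i) := by
      simp only [rep, dif_pos hex]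
      exact hex.choose_spec
    exact hi _ hmem ⟨(hr _ _).2 hgi.ge, (hr _ _).2 hgi.le⟩
  refine ⟨B, ?_, ?_, ?_⟩
  · rintro p ⟨i, rfl⟩
    exact (key (r (Sum.inr i))).2.2 i rfl
  · refine ⟨?_, ?_, ?_, ?_, ?_⟩
    · apply Set.Infinite.mono (s := Set.range a)
      · rintro n ⟨i, rfl⟩
        exact hsecInf i
      · have hra : Set.range a = rho A r '' Set.range (fun i => r (Sum.inl i)) := by
          rw [ha, ← Set.range_comp]
          rfl
        rw [hra]
        exact hrangeInf.image (hmono.injective.injOn)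
    · rintro n ⟨y, hy⟩
      obtain ⟨i, hia, -⟩ := (hmemB n y).1 hy
      rw [← hia]
      exact hsecInf i
    · intro m n hmn
      rw [Set.disjoint_left]
      intro y hym hyn
      obtain ⟨i, hia, hib⟩ := (hmemB m y).1 hym
      obtain ⟨j, hja, hjb⟩ := (hmemB n y).1 hyn
      have : i = j := hbmono.injective (hib.trans hjb.symm)
      exact hmn ((hia.symm.trans (this ▸ hja)))
    · rintro p ⟨i, rfl⟩
      exact hmono (hxy i)
    · rintro p ⟨i, rfl⟩ q ⟨j, rfl⟩
      exact fun h => hxny i j (hmono.injective h)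
  · refine ⟨a, b, hbmono, rfl, fun u v => ?_⟩
    have h1 : ∀ u : OSym, osymVal a b u = rho A r (r u) := by
      rintro (i | i) <;> rfl
    rw [hr, h1, h1, hmono.le_iff_le]
end

section
/- Let A ∈ 𝔓 and n ∈ ω. Then every n-element subset of A realizes a unique n-type, and for every n-type τ there exists an n-element subset of A realizing τ. -/
open Filter Set

open Classical in
noncomputable def buildV (A : Set (ℕ × ℕ)) (n : ℕ) (r : Symb n → ℕ)
    (hr : ∀ i : Fin n, r (Sum.inl i) < r (Sum.inr i)) : ℕ → ℕ
  | j =>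
    let prev : ℕ := if h : 0 < j then buildV A n r hr (j - 1) else 0
    if h : ∃ i : Fin n, r (Sum.inr i) = j then
      if hs : (sec A (buildV A n r hr (r (Sum.inl h.choose)))).Infinite then
        (hs.exists_gt prev).choose
      else 0
    else
      if hx : {m | (sec A m).Infinite}.Infinite then (hx.exists_gt prev).choose else 0
  termination_by j => j
  decreasing_by
  all_goals first
  | omega
  | (have := h.choose_spec; have := hr h.choose; omega)

lemma buildV_sec {A : Set (ℕ × ℕ)} {n : ℕ} {r : Symb n → ℕ}
    {hr : ∀ i : Fin n, r (Sum.inl i) < r (Sum.inr i)}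
    (j : ℕ) (hj : ¬ ∃ i : Fin n, r (Sum.inr i) = j)
    (hAinf : {m | (sec A m).Infinite}.Infinite) :
    (sec A (buildV A n r hr j)).Infinite := by
  rw [buildV]
  simp only [dif_neg hj, dif_pos hAinf]
  exact (hAinf.exists_gt _).choose_spec.1

lemma buildV_strictMono {A : Set (ℕ × ℕ)} {n : ℕ} {r : Symb n → ℕ}
    {hr : ∀ i : Fin n, r (Sum.inl i) < r (Sum.inr i)}
    (hAinf : {m | (sec A m).Infinite}.Infinite)
    (hxy : ∀ i i' : Fin n, r (Sum.inl i) ≠ r (Sum.inr i')) :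
    StrictMono (buildV A n r hr) := by
  apply strictMono_nat_of_lt_succ
  intro j
  conv_rhs => rw [buildV]
  have hprev : (if h : 0 < j + 1 then buildV A n r hr (j + 1 - 1) else 0) = buildV A n r hr j := by
    simp
  by_cases h : ∃ i : Fin n, r (Sum.inr i) = j + 1
  · have hs : (sec A (buildV A n r hr (r (Sum.inl h.choose)))).Infinite := by
      apply buildV_sec
      · intro ⟨i', hi'⟩; exact hxy h.choose i' hi'.symm
      · exact hAinf
    simp only [dif_pos h, dif_pos hs, hprev]
    exact (hs.exists_gt _).choose_spec.2
  · simp only [dif_neg h, dif_pos hAinf, hprev]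
    exact (hAinf.exists_gt _).choose_spec.2

lemma buildV_mem {A : Set (ℕ × ℕ)} {n : ℕ} {r : Symb n → ℕ}
    {hr : ∀ i : Fin n, r (Sum.inl i) < r (Sum.inr i)}
    (hAinf : {m | (sec A m).Infinite}.Infinite)
    (hxy : ∀ i i' : Fin n, r (Sum.inl i) ≠ r (Sum.inr i'))
    (hrinj : Function.Injective (fun i : Fin n => r (Sum.inr i))) (i : Fin n) :
    (buildV A n r hr (r (Sum.inl i)), buildV A n r hr (r (Sum.inr i))) ∈ A := by
  have h : ∃ i' : Fin n, r (Sum.inr i') = r (Sum.inr i) := ⟨i, rfl⟩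
  have hch : h.choose = i := hrinj h.choose_spec
  have hs : (sec A (buildV A n r hr (r (Sum.inl h.choose)))).Infinite := by
    apply buildV_sec
    · intro ⟨i', hi'⟩; exact hxy h.choose i' hi'.symm
    · exact hAinf
  set prev := (if _ : 0 < r (Sum.inr i) then buildV A n r hr (r (Sum.inr i) - 1) else 0) with hprev
  have heq : buildV A n r hr (r (Sum.inr i)) = (hs.exists_gt prev).choose := by
    conv_lhs => rw [buildV]
    simp only [dif_pos h, dif_pos hs, hprev]
  have hmem := (hs.exists_gt prev).choose_spec.1
  rw [← heq, hch] at hmem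
  exact hmem

/-- every n-element subset of an element of 𝔓 realizes a unique n-type,
and every n-type is realized by some n-element subset. -/
theorem stmt18 (A : Set (ℕ × ℕ)) (hA : memP A) (n : ℕ) :
    (∀ s : Set (ℕ × ℕ), s ⊆ A → s.Finite → s.ncard = n →
      ∃! τ : Symb n → Symb n → Prop, IsNType n τ ∧ Realizes τ s) ∧
    (∀ τ : Symb n → Symb n → Prop, IsNType n τ →
      ∃ s : Set (ℕ × ℕ), s ⊆ A ∧ s.Finite ∧ s.ncard = n ∧ Realizes τ s) := by
  obtain ⟨hA1, hA2, hA3, hA4, hA5⟩ := hA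
  constructor
  · -- Part 1: unique realized type
    intro s hsA hsf hsn
    have hinj : ∀ p ∈ s, ∀ q ∈ s, p.2 = q.2 → p = q := by
      intro p hp q hq h2
      have h1 : p.1 = q.1 := by
        by_contra hne
        exact (hA3 p.1 q.1 hne).ne_of_mem (show p.2 ∈ sec A p.1 from hsA hp)
          (show q.2 ∈ sec A q.1 from hsA hq) h2
      exact Prod.ext h1 h2
    have hcard : hsf.toFinset.card = n := by
      rw [← hsn, Set.ncard_eq_toFinset_card _ hsf]
    set tb := hsf.toFinset.image Prod.snd with htb
    have htbcard : tb.card = n := by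
      rw [htb, Finset.card_image_of_injOn, hcard]
      intro p hp q hq h
      exact hinj p (by simpa using hp) q (by simpa using hq) h
    set e := tb.orderIsoOfFin htbcard with he
    set b := fun i : Fin n => (e i : ℕ) with hbdef
    have hb : StrictMono b := fun i j h => Subtype.coe_lt_coe.2 (e.strictMono h)
    have hbmem : ∀ i, ∃ x, (x, b i) ∈ s := by
      intro i
      obtain ⟨p, hp, hp2⟩ := Finset.mem_image.1 (e i).2
      rw [Set.Finite.mem_toFinset] at hp
      exact ⟨p.1, by rwa [show (p.1, b i) = p from Prod.ext rfl hp2.symm]⟩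
    set a := fun i => (hbmem i).choose with hadef
    have habs : ∀ i, (a i, b i) ∈ s := fun i => (hbmem i).choose_spec
    have hrange : s = Set.range (fun i => (a i, b i)) := by
      ext p
      constructor
      · intro hp
        have hp2 : p.2 ∈ tb :=
          Finset.mem_image.2 ⟨p, (Set.Finite.mem_toFinset _).2 hp, rfl⟩
        obtain ⟨i, hi⟩ := e.surjective ⟨p.2, hp2⟩
        have hbi : b i = p.2 := by rw [hbdef]; exact congrArg Subtype.val hi
        exact ⟨i, (hinj _ (habs i) p hp hbi).symm ▸ rfl⟩
      · rintro ⟨i, rfl⟩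
        exact habs i
    refine ⟨fun u v => symVal a b u ≤ symVal a b v, ⟨⟨fun u => le_refl _,
      fun u v w => le_trans, fun u v => le_total _ _,
      fun i j h => ⟨(hb h).le, not_le.2 (hb h)⟩,
      fun i => ⟨(hA4 _ (hsA (habs i))).le, not_le.2 (hA4 _ (hsA (habs i)))⟩, ?_⟩,
      a, b, hb, hrange, fun u v => Iff.rfl⟩, ?_⟩
    · intro u v huv h1 h2
      have heq : symVal a b u = symVal a b v := le_antisymm h1 h2
      match u, v with
      | Sum.inl i, Sum.inl j => exact ⟨⟨i, rfl⟩, ⟨j, rfl⟩⟩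
      | Sum.inl i, Sum.inr j =>
        exact absurd heq (hA5 _ (hsA (habs i)) _ (hsA (habs j)))
      | Sum.inr i, Sum.inl j =>
        exact absurd heq.symm (hA5 _ (hsA (habs j)) _ (hsA (habs i)))
      | Sum.inr i, Sum.inr j =>
        have : i = j := hb.injective heq
        exact absurd (by rw [this]) huv
    · rintro τ' ⟨ht', a', b', hb', hs', hiff'⟩
      have hbr : Set.range b' = Set.range b := by
        have h1 : Set.range b' = Prod.snd '' s := by
          rw [hs', ← Set.range_comp]
          rfl
        have h2 : Set.range b = Prod.snd '' s := by
          rw [hrange, ← Set.range_comp]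
          rfl
        rw [h1, h2]
      haveI : WellFoundedLT (Fin n) := Finite.to_wellFoundedLT
      have hbb' : b' = b := (hb'.range_inj hb).mp hbr
      have haa' : a' = a := by
        funext i
        have h1 : (a' i, b i) ∈ s := by
          rw [hs', ← hbb']
          exact ⟨i, rfl⟩
        have := hinj _ h1 _ (habs i) rfl
        exact congrArg Prod.fst this
      funext u v
      refine propext ((hiff' u v).trans ?_)
      rw [haa', hbb']
  · -- Part 2: every n-type is realized
    intro τ ht
    classical
    set r : Symb n → ℕ :=
      fun u => ((Finset.univ : Finset (Symb n)).filter (fun w => τ w u ∧ ¬ τ u w)).card with hrdef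
    have hmono : ∀ u v, τ u v → r u ≤ r v := by
      intro u v huv
      apply Finset.card_le_card
      intro w hw
      rw [Finset.mem_filter] at hw ⊢
      exact ⟨Finset.mem_univ _, ht.trans _ _ _ hw.2.1 huv,
        fun hvw => hw.2.2 (ht.trans _ _ _ huv hvw)⟩
    have hstrict : ∀ u v, τ u v → ¬ τ v u → r u < r v := by
      intro u v huv hvu
      apply Finset.card_lt_card
      constructor
      · intro w hw
        rw [Finset.mem_filter] at hw ⊢
        exact ⟨Finset.mem_univ _, ht.trans _ _ _ hw.2.1 huv,
          fun hvw => hw.2.2 (ht.trans _ _ _ huv hvw)⟩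
      · intro hsub
        have hu : u ∈ Finset.univ.filter (fun w => τ w v ∧ ¬ τ v w) :=
          Finset.mem_filter.2 ⟨Finset.mem_univ _, huv, hvu⟩
        have := Finset.mem_filter.1 (hsub hu)
        exact this.2.2 (ht.refl u)
    have hiffr : ∀ u v, τ u v ↔ r u ≤ r v := by
      intro u v
      constructor
      · exact hmono u v
      · intro hle
        by_contra huv
        have hvu : τ v u := (ht.total u v).resolve_left huv
        exact absurd hle (not_le.2 (hstrict v u hvu huv))
    have hr : ∀ i : Fin n, r (Sum.inl i) < r (Sum.inr i) :=
      fun i => hstrict _ _ (ht.x_lt_y i).1 (ht.x_lt_y i).2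
    have hxy : ∀ i i' : Fin n, r (Sum.inl i) ≠ r (Sum.inr i') := by
      intro i i' heq
      have h1 : τ (Sum.inl i) (Sum.inr i') := (hiffr _ _).2 heq.le
      have h2 : τ (Sum.inr i') (Sum.inl i) := (hiffr _ _).2 heq.ge
      obtain ⟨-, j, hj⟩ := ht.equiv_xx _ _ (by simp) h1 h2
      exact Sum.inr_ne_inl hj
    have hrymono : StrictMono (fun i : Fin n => r (Sum.inr i)) :=
      fun i j h => hstrict _ _ (ht.y_lt i j h).1 (ht.y_lt i j h).2
    have hrinj : Function.Injective (fun i : Fin n => r (Sum.inr i)) := hrymono.injective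
    set a : Fin n → ℕ := fun i => buildV A n r hr (r (Sum.inl i)) with hadef
    set b : Fin n → ℕ := fun i => buildV A n r hr (r (Sum.inr i)) with hbdef
    have hVmono : StrictMono (buildV A n r hr) := buildV_strictMono hA1 hxy
    have hb : StrictMono b := fun i j h => hVmono (hrymono h)
    have hmem : ∀ i, (a i, b i) ∈ A := fun i => buildV_mem hA1 hxy hrinj i
    have hval : ∀ u, symVal a b u = buildV A n r hr (r u) := by
      intro u
      cases u <;> rfl
    refine ⟨Set.range (fun i => (a i, b i)), ?_, Set.finite_range _, ?_, a, b, hb, rfl, ?_⟩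
    · rintro p ⟨i, rfl⟩
      exact hmem i
    · rw [Set.ncard_eq_toFinset_card', Set.toFinset_range, Finset.card_image_of_injective _
        (fun i j hij => hb.injective (congrArg Prod.snd hij))]
      simp
    · intro u v
      rw [hval u, hval v, hiffr u v]
      exact ⟨fun h => hVmono.le_iff_le.2 h, fun h => hVmono.le_iff_le.1 h⟩
end

section
/- Every selective ultrafilter U on ω satisfies ω→(U)ⁿ_k for all n,k ∈ ω: whenever the set [ω]ⁿ of n-element subsets of ω is partitioned into k pieces, there is a set H ∈ U such that [H]ⁿ is included in one piece. -/
open Filter Set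

/-! By induction on `n`: colour the `n`-sets above each `x` by `s ↦ c (insert x s)`, get
`H x ∈ U` homogeneous of colour `i x`, let `U` choose one colour `j`, and take a diagonal
intersection `C` of the `H x` (`y ∈ H x` whenever `x < y` in `C`); then `C ∩ {x | i x = j}` works.
Selectivity gives diagonal intersections: the index `f y` of the first `A n` missing `y` is
injective on some `B ∈ U`, so it remains to find `C ∈ U` whose points are spread out faster than
any given `g`, which the Q-point property yields when applied to the block index of a fast
interval partition of `ℕ`. -/

lemma exists_strictMono_bound (g : ℕ → ℕ) :
    ∃ M : ℕ → ℕ, M 0 = 0 ∧ StrictMono M ∧ ∀ i x, x < M i → g x < M (i + 1) := by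
  refine ⟨fun i => Nat.rec 0 (fun _ m => m + 1 + (Finset.range m).sup g) i, rfl,
    strictMono_nat_of_lt_succ fun i => by simp only; omega, fun i x hx => ?_⟩
  have := Finset.le_sup (f := g) (Finset.mem_range.mpr hx)
  simp only at this ⊢
  omega

lemma exists_block_index (g : ℕ → ℕ) :
    ∃ idx : ℕ → ℕ, Monotone idx ∧ (∀ m, (idx ⁻¹' {m}).Finite) ∧
      ∀ x y, idx x + 2 ≤ idx y → g x ≤ y := by
  obtain ⟨M, hM0, hM, hg⟩ := exists_strictMono_bound g
  have hex : ∀ y, ∃ i, y < M (i + 1) := fun y => ⟨y, hM.id_le (y + 1)⟩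
  classical
  let idx y := Nat.find (hex y)
  have lt_next : ∀ y, y < M (idx y + 1) := fun y => Nat.find_spec (hex y)
  have start_le : ∀ y, M (idx y) ≤ y := by
    intro y
    rcases h : idx y with _ | i
    · simp [hM0]
    · exact not_lt.mp (Nat.find_min (hex y) (show i < idx y by omega))
  refine ⟨idx, fun x y hxy => Nat.find_min' _ ((lt_next y).trans_le' hxy), fun m => ?_,
    fun x y hxy => ?_⟩
  · refine (Set.finite_Iio (M (m + 1))).subset fun y hy => ?_
    simp only [Set.mem_preimage, Set.mem_singleton_iff] at hy
    exact hy ▸ lt_next y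
  · calc g x ≤ M (idx x + 2) := (hg _ x (lt_next x)).le
      _ ≤ M (idx y) := hM.monotone hxy
      _ ≤ y := start_le y

lemma Set.InjOn.exists_forall_lt_apply_of_le {f : ℕ → ℕ} {B : Set ℕ} (hf : Set.InjOn f B)
    (n : ℕ) : ∃ b, ∀ y ∈ B, b ≤ y → n < f y := by
  have hfin : {y | y ∈ B ∧ f y ≤ n}.Finite :=
    Set.Finite.of_finite_image ((Set.finite_Iic n).subset (by rintro _ ⟨y, ⟨-, hy⟩, rfl⟩; exact hy))
      (hf.mono fun _ hy => hy.1)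
  obtain ⟨b, hb⟩ := hfin.bddAbove
  exact ⟨b + 1, fun y hy hby => not_le.mp fun hfy => by have := hb ⟨hy, hfy⟩; omega⟩

namespace Selective

variable {U : Ultrafilter ℕ}

lemma infinite_of_mem (hU : Selective U) {A : Set ℕ} (hA : A ∈ U) : A.Infinite :=
  Filter.frequently_cofinite_iff_infinite.mp ((U.frequently_iff_eventually.mpr hA).filter_mono hU.1)

lemma exists_mem_injOn_of_finite_fibers (hU : Selective U) {f : ℕ → ℕ}
    (hf : ∀ m, (f ⁻¹' {m}).Finite) : ∃ B ∈ U, Set.InjOn f B := by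
  obtain ⟨B, hB, hinj | ⟨c, hc⟩⟩ := hU.2 f
  · exact ⟨B, hB, hinj⟩
  · exact absurd ((hf c).subset hc) (hU.infinite_of_mem hB)

lemma exists_mem_forall_le_of_lt (hU : Selective U) (g : ℕ → ℕ) :
    ∃ C ∈ U, ∀ x ∈ C, ∀ y ∈ C, x < y → g x ≤ y := by
  obtain ⟨idx, hmono, hfin, hgap⟩ := exists_block_index g
  have fibers_finite : ∀ r m, ((fun y => (idx y + r) / 2) ⁻¹' {m}).Finite := fun r m =>
    (Set.Finite.biUnion (Set.finite_Iic (2 * m + 1)) fun j _ => hfin j).subset fun y hy => by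
      simp only [Set.mem_preimage, Set.mem_singleton_iff] at hy
      exact Set.mem_biUnion (x := idx y) (by simp only [Set.mem_Iic]; omega) rfl
  -- injectivity of both `idx / 2` and `(idx + 1) / 2` forces the blocks to be two apart
  obtain ⟨B₀, hB₀, hinj₀⟩ := hU.exists_mem_injOn_of_finite_fibers (fibers_finite 0)
  obtain ⟨B₁, hB₁, hinj₁⟩ := hU.exists_mem_injOn_of_finite_fibers (fibers_finite 1)
  refine ⟨B₀ ∩ B₁, Filter.inter_mem hB₀ hB₁, fun x ⟨hx₀, hx₁⟩ y ⟨hy₀, hy₁⟩ hxy => hgap x y ?_⟩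
  have := hmono hxy.le
  by_contra hclose
  rcases (by omega : (idx x + 0) / 2 = (idx y + 0) / 2 ∨ (idx x + 1) / 2 = (idx y + 1) / 2)
    with h | h
  · exact hxy.ne (hinj₀ hx₀ hy₀ h)
  · exact hxy.ne (hinj₁ hx₁ hy₁ h)

lemma exists_mem_diagonal (hU : Selective U) {A : ℕ → Set ℕ} (hA : ∀ x, A x ∈ U) :
    ∃ C ∈ U, ∀ x ∈ C, ∀ y ∈ C, x < y → y ∈ A x := by
  classical
  have hex : ∀ y, ∃ n, y ≤ n ∨ y ∉ A n := fun y => ⟨y, .inl le_rfl⟩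
  let f y := Nat.find (hex y)
  have mem_of_lt : ∀ y n, n < f y → y ∈ A n := fun y n hn => by
    have := Nat.find_min (hex y) hn
    tauto
  obtain ⟨B, hB, hinj | ⟨c, hc⟩⟩ := hU.2 f
  · choose b hb using hinj.exists_forall_lt_apply_of_le
    obtain ⟨C, hC, hCb⟩ := hU.exists_mem_forall_le_of_lt b
    exact ⟨B ∩ C, Filter.inter_mem hB hC, fun x ⟨_, hxC⟩ y ⟨hyB, hyC⟩ hxy =>
      mem_of_lt y x (hb x y hyB (hCb x hxC y hyC hxy))⟩
  · obtain ⟨y, hyB, hyA, hcy⟩ := U.nonempty_of_mem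
      (Filter.inter_mem hB (Filter.inter_mem (hA c) (hU.1 (Set.finite_Iic c).compl_mem_cofinite)))
    have : y ≤ f y ∨ y ∉ A (f y) := Nat.find_spec (hex y)
    rw [hc y hyB] at this
    simp only [Set.mem_compl_iff, Set.mem_Iic] at hcy
    tauto

lemma exists_mem_ramsey (hU : Selective U) {ι : Type*} [Finite ι] (n : ℕ) (c : Set ℕ → ι) :
    ∃ H ∈ U, ∃ i, ∀ s ⊆ H, s.Finite → s.ncard = n → c s = i := by
  induction n generalizing c with
  | zero =>
    exact ⟨Set.univ, Filter.univ_mem, c ∅, fun s _ hs hcard => by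
      rw [(Set.ncard_eq_zero hs).mp hcard]⟩
  | succ n ih =>
    choose H hHU i hi using fun x => ih (fun s => c (insert x s))
    obtain ⟨j, hj⟩ := (U.map i).eq_pure_of_finite
    have hjU : i ⁻¹' {j} ∈ U := by
      rw [← Ultrafilter.mem_map, hj]
      exact rfl
    obtain ⟨C, hCU, hC⟩ := hU.exists_mem_diagonal hHU
    refine ⟨C ∩ i ⁻¹' {j}, Filter.inter_mem hCU hjU, j, fun s hsub hs hcard => ?_⟩
    have hne : s.Nonempty := (Set.ncard_pos hs).mp (by omega)
    set x := sInf s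
    have hxs : x ∈ s := Nat.sInf_mem hne
    have hrest : s \ {x} ⊆ H x := fun y ⟨hys, hyx⟩ =>
      hC x (hsub hxs).1 y (hsub hys).1 ((Nat.sInf_le hys).lt_of_ne (Ne.symm hyx))
    have := hi x (s \ {x}) hrest (hs.subset Set.sdiff_subset)
      (by rw [Set.ncard_sdiff_singleton_of_mem hxs]; omega)
    rwa [Set.insert_sdiff_singleton, Set.insert_eq_self.mpr hxs, (hsub hxs).2] at this

end Selective

/-- every selective ultrafilter U on ω satisfies ω→(U)ⁿ_k for all n, k. -/
theorem stmt19 (U : Ultrafilter ℕ) (hU : Selective U) (n k : ℕ)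
    (c : Set ℕ → Fin k) :
    ∃ H ∈ U, ∃ i : Fin k,
      ∀ s : Set ℕ, s ⊆ H → s.Finite → s.ncard = n → c s = i :=
  hU.exists_mem_ramsey n c
end
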